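/- arXiv:1609.08311 — 6 statements merged into one kernel-verified Lean document; each statement's English description precedes it below -/
import Mathlib

section
/- Let G be a finite group. A subgroup K of G is a sol-component of G if and only if K is a minimal member, under inclusion, of the set of nonsolvable subnormal subgroups of G. -/
/-!
Two facts carry the proof.

* A solvable subnormal subgroup `S` of a finite group `G` lies in `sol G`: `S` lies in a proper
  normal subgroup `K`, by induction on `|G|` in `sol K`, and `sol K` is characteristic in `K`, hence
  a solvable normal subgroup of `G`. So `G ⧸ sol G` has no nontrivial solvable subnormal subgroup.
* If `H` is perfect, `f : H →* Q` has solvable kernel, and `M` is subnormal in `H` with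
  `f(M) = f(H)`, then `M = H`. Going down a subnormal series from `H`, each term `M ⊴ H` still
  maps onto `f(H)`, so `H = M · ker f` and `H ⧸ M` is solvable and perfect, hence trivial.

If `K` is minimal among nonsolvable subnormal subgroups, then `⁅K, K⁆ = K` by minimality, and a
normal subgroup of the image `K̄` of `K` in `G ⧸ sol G` is trivial if solvable (first fact), and is
all of `K̄` otherwise, since its preimage in `K` is nonsolvable subnormal; a simple nonsolvable group
is quasisimple. Conversely, a nonsolvable subnormal subgroup of a quasisimple group `H` is all of
`H`: its image in the simple group `H ⧸ Z(H)` is subnormal and nontrivial, so the second fact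
applies to `H → H ⧸ Z(H)`. Hence if `K̄` is quasisimple and `L ≤ K` is nonsolvable subnormal, then
`L̄ = K̄`, and the second fact for `K → G ⧸ sol G` gives `L = K`.
-/

/-- A subgroup is subnormal if it is a term of a finite chain of subgroups,
each normal in the next, ending at the whole group. -/
def Subgroup.IsSubnormalIn {G : Type*} [Group G] (H : Subgroup G) : Prop :=
  ∃ (n : ℕ) (c : Fin (n + 1) → Subgroup G),
    c 0 = H ∧ c (Fin.last n) = ⊤ ∧
    ∀ i : Fin n, c i.castSucc ≤ c i.succ ∧ ((c i.castSucc).subgroupOf (c i.succ)).Normal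

/-- A group is quasisimple if it is perfect and its quotient by its center is simple. -/
def IsQuasisimple (H : Type*) [Group H] : Prop :=
  (⁅(⊤ : Subgroup H), (⊤ : Subgroup H)⁆ = ⊤) ∧ IsSimpleGroup (H ⧸ Subgroup.center H)

/-- A component of a group is a quasisimple subnormal subgroup. -/
def Subgroup.IsComponent {G : Type*} [Group G] (K : Subgroup G) : Prop :=
  K.IsSubnormalIn ∧ IsQuasisimple K

/-- `sol G` : the subgroup generated by all normal solvable subgroups of `G`;
for finite `G` this is the largest normal solvable subgroup. -/
def sol (G : Type*) [Group G] : Subgroup G :=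
  Subgroup.closure {x : G | ∃ N : Subgroup G, N.Normal ∧ IsSolvable N ∧ x ∈ N}

instance sol_normal (G : Type*) [Group G] : (sol G).Normal := by
  constructor
  intro n hn g
  induction hn using Subgroup.closure_induction with
  | mem x hx =>
      obtain ⟨N, hN, hNs, hxN⟩ := hx
      exact Subgroup.subset_closure ⟨N, hN, hNs, hN.conj_mem x hxN g⟩
  | one => simpa using (sol G).one_mem
  | mul x y _ _ hx hy =>
      have : g * (x * y) * g⁻¹ = (g * x * g⁻¹) * (g * y * g⁻¹) := by group
      rw [this]; exact (sol G).mul_mem hx hy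
  | inv x _ hx =>
      have : g * x⁻¹ * g⁻¹ = (g * x * g⁻¹)⁻¹ := by group
      rw [this]; exact (sol G).inv_mem hx

/-- A sol-component of `G`: a perfect subnormal subgroup whose image in `G/sol(G)`
is a component of `G/sol(G)`. -/
def Subgroup.IsSolComponent {G : Type*} [Group G] (K : Subgroup G) : Prop :=
  ⁅K, K⁆ = K ∧ K.IsSubnormalIn ∧
    (K.map (QuotientGroup.mk' (sol G))).IsComponent

/-- The subgroup generated by the sol-components. -/
def layerSol (G : Type*) [Group G] : Subgroup G :=
  Subgroup.closure {x : G | ∃ K : Subgroup G, K.IsSolComponent ∧ x ∈ K}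

/-- `O*(G) = sol(G) · layerSol(G)`. -/
def Ostar (G : Type*) [Group G] : Subgroup G := sol G ⊔ layerSol G

/-- The Fitting subgroup: the subgroup generated by all nilpotent normal subgroups. -/
def fitting (G : Type*) [Group G] : Subgroup G :=
  Subgroup.closure {x : G | ∃ N : Subgroup G, N.Normal ∧ Group.IsNilpotent N ∧ x ∈ N}

/-- The layer `E(G)`: the subgroup generated by all components. -/
def layer (G : Type*) [Group G] : Subgroup G :=
  Subgroup.closure {x : G | ∃ K : Subgroup G, K.IsComponent ∧ x ∈ K}

/-- The generalized Fitting subgroup `F*(G) = F(G)E(G)`. -/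
def Fstar (G : Type*) [Group G] : Subgroup G := fitting G ⊔ layer G

/-- `O_p(G)` : the subgroup generated by all normal `p`-subgroups of `G`. -/
def pCore (p : ℕ) (G : Type*) [Group G] : Subgroup G :=
  Subgroup.closure {x : G | ∃ N : Subgroup G, N.Normal ∧ IsPGroup p N ∧ x ∈ N}

section

open Subgroup

variable {G : Type*} [Group G]

theorem Subgroup.isSubnormalIn_iff_isSubnormal {H : Subgroup G} :
    H.IsSubnormalIn ↔ H.IsSubnormal := by
  constructor
  · rintro ⟨n, c, rfl, hlast, hchain⟩
    suffices ∀ i, (c i).IsSubnormal from this 0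
    intro i
    induction i using Fin.reverseInduction with
    | last => exact hlast ▸ IsSubnormal.top
    | cast i ih => exact .step _ _ (hchain i).1 ih (hchain i).2
  · intro h
    induction h with
    | top => exact ⟨0, fun _ ↦ ⊤, rfl, rfl, fun i ↦ i.elim0⟩
    | step H K hle _ hnormal ih =>
      obtain ⟨n, c, rfl, hlast, hchain⟩ := ih
      refine ⟨n + 1, Fin.cons H c, rfl, by rw [← Fin.succ_last, Fin.cons_succ, hlast], ?_⟩
      intro i
      cases i using Fin.cases with
      | zero => exact ⟨hle, hnormal⟩
      | succ i => rw [← Fin.succ_castSucc, Fin.cons_succ, Fin.cons_succ]; exact hchain i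

section Solvable

variable {G' : Type*} [Group G']

theorem Subgroup.isSolvable_of_le {H K : Subgroup G} (hle : H ≤ K) [Group.IsSolvable K] :
    Group.IsSolvable H :=
  Group.isSolvable_of_isSolvable_injective (inclusion_injective hle)

theorem Subgroup.isSolvable_map (f : G →* G') (H : Subgroup G) [Group.IsSolvable H] :
    Group.IsSolvable (H.map f) :=
  Group.isSolvable_of_surjective (f.subgroupMap_surjective H)

theorem Subgroup.isSolvable_comap {f : G →* G'} [Group.IsSolvable f.ker] (N : Subgroup G')
    [Group.IsSolvable N] : Group.IsSolvable (N.comap f) :=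
  Group.isSolvable_of_ker_le_range (inclusion (ker_le_comap f N)) (f.subgroupComap N)
    fun x hx ↦ ⟨⟨x, congrArg Subtype.val hx⟩, rfl⟩

instance Subgroup.isSolvable_subgroupOf {H : Subgroup G} (K : Subgroup G) [Group.IsSolvable H] :
    Group.IsSolvable (H.subgroupOf K) :=
  Group.isSolvable_of_isSolvable_injective (f := K.subtype.subgroupComap H)
    fun _ _ h ↦ by ext; exact congrArg (Subtype.val : H → G) h

theorem Subgroup.isSolvable_of_isSolvable_map {f : G →* G'}
    [Group.IsSolvable f.ker] (M : Subgroup G) [Group.IsSolvable (M.map f)] :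
    Group.IsSolvable M :=
  have := isSolvable_comap (f := f) (M.map f)
  isSolvable_of_le (le_comap_map f M)

theorem Subgroup.isSolvable_sup_of_normal_left {N M : Subgroup G} [N.Normal] [Group.IsSolvable N]
    [Group.IsSolvable M] : Group.IsSolvable ↥(N ⊔ M) := by
  have hquot : Group.IsSolvable (↥(M ⊔ N) ⧸ N.subgroupOf (M ⊔ N)) :=
    Group.isSolvable_of_surjective
      (f := (QuotientGroup.quotientInfEquivProdNormalQuotient M N).toMonoidHom)
      (MulEquiv.surjective _)
  have : Group.IsSolvable ↥(M ⊔ N) :=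
    (Group.isSolvable_iff_subgroup_quotient (N.subgroupOf (M ⊔ N))).2 ⟨inferInstance, hquot⟩
  rwa [sup_comm]

theorem Group.isSolvable_of_isSolvable_commutator [Group.IsSolvable (commutator G)] :
    Group.IsSolvable G :=
  (isSolvable_iff_subgroup_quotient (commutator G)).2
    ⟨‹_›, (inferInstance : Group.IsSolvable (Abelianization G))⟩

end Solvable

theorem le_sol_of_normal {N : Subgroup G} (hN : N.Normal) (hs : Group.IsSolvable N) : N ≤ sol G :=
  fun _ hx ↦ subset_closure ⟨N, hN, hs, hx⟩

instance isSolvable_sol [Finite G] : Group.IsSolvable (sol G) := by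
  obtain ⟨N, ⟨hN, _⟩, hmax⟩ :=
    (Set.toFinite {N : Subgroup G | N.Normal ∧ Group.IsSolvable N}).exists_maximal
      ⟨⊥, normal_bot, inferInstance⟩
  suffices sol G ≤ N from Subgroup.isSolvable_of_le this
  refine closure_le _ |>.2 ?_
  rintro x ⟨M, hM, hMs, hx⟩
  have : Group.IsSolvable M := hMs
  exact hmax ⟨sup_normal N M, isSolvable_sup_of_normal_left⟩ le_sup_left
    (le_sup_right (α := Subgroup G) hx)

instance sol_characteristic : (sol G).Characteristic := by
  refine characteristic_iff_map_le.2 fun φ ↦ ?_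
  rw [sol, MonoidHom.map_closure]
  refine closure_le _ |>.2 ?_
  rintro _ ⟨x, ⟨N, hN, hNs, hx⟩, rfl⟩
  have : Group.IsSolvable N := hNs
  exact subset_closure ⟨N.map φ.toMonoidHom, hN.map _ φ.surjective, isSolvable_map _ N,
    mem_map_of_mem _ hx⟩

theorem le_sol_of_isSubnormal [Finite G] {S : Subgroup G} (hS : S.IsSubnormal)
    [Group.IsSolvable S] : S ≤ sol G := by
  induction hcard : Nat.card G using Nat.strong_induction_on generalizing G with
  | _ n ih =>
  obtain rfl | ⟨K, hK, hSK, hKlt⟩ := hS.lt_normal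
  · exact le_sol_of_normal normal_top ‹_›
  have hlt : Nat.card K < n :=
    hcard ▸ (card_le_card_group K).lt_of_ne (mt (card_eq_iff_eq_top K).1 hKlt.ne)
  calc S = (S.subgroupOf K).map K.subtype := (map_subgroupOf_eq_of_le hSK).symm
    _ ≤ (sol K).map K.subtype := map_mono (ih _ hlt hS.subgroupOf rfl)
    -- `sol K` is characteristic in the normal subgroup `K`
    _ ≤ sol G := le_sol_of_normal inferInstance (isSolvable_map _ _)

section Perfect

variable {H : Type*} [Group H]

theorem Subgroup.IsSubnormal.eq_top_of_map_eq_range [Group.IsPerfect H] {Q : Type*} [Group Q]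
    (f : H →* Q) [Group.IsSolvable f.ker] {M : Subgroup H} (hM : M.IsSubnormal)
    (hfM : M.map f = f.range) : M = ⊤ := by
  induction hM with
  | top => rfl
  | step M T hle _ hnormal ih =>
    obtain rfl : T = ⊤ := ih (le_antisymm (map_le_range f T) (hfM ▸ map_mono hle))
    have : M.Normal := by
      rwa [normal_subgroupOf_iff_le_normalizer hle, top_le_iff, normalizer_eq_top_iff] at hnormal
    have : Group.IsSolvable (H ⧸ M) := by
      refine Group.isSolvable_of_surjective (f := (QuotientGroup.mk' M).comp f.ker.subtype) ?_
      intro q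
      obtain ⟨h, rfl⟩ := QuotientGroup.mk'_surjective M q
      obtain ⟨m, hm, hmh⟩ : f h ∈ M.map f := hfM ▸ ⟨h, rfl⟩
      refine ⟨⟨m⁻¹ * h, by simp [hmh]⟩, ?_⟩
      have hm1 : QuotientGroup.mk' M m = 1 := by rwa [← MonoidHom.mem_ker, QuotientGroup.ker_mk']
      change QuotientGroup.mk' M (m⁻¹ * h) = _
      rw [map_mul, map_inv, hm1, inv_one, one_mul]
    by_contra hne
    have : Nontrivial (H ⧸ M) := QuotientGroup.nontrivial_iff.2 hne
    exact Group.IsPerfect.not_isSolvable (H ⧸ M) ‹_›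

theorem IsQuasisimple.isPerfect (hH : IsQuasisimple H) : Group.IsPerfect H :=
  ⟨hH.1⟩

theorem IsQuasisimple.not_isSolvable (hH : IsQuasisimple H) : ¬ Group.IsSolvable H := by
  have := hH.isPerfect
  have := hH.2
  have : Nontrivial H := (QuotientGroup.mk'_surjective (center H)).nontrivial
  exact Group.IsPerfect.not_isSolvable H

theorem IsQuasisimple.eq_top_of_isSubnormal (hH : IsQuasisimple H) {M : Subgroup H}
    (hM : M.IsSubnormal) (hns : ¬ Group.IsSolvable M) : M = ⊤ := by
  have := hH.isPerfect
  have : Group.IsSolvable (QuotientGroup.mk' (center H)).ker := by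
    rw [QuotientGroup.ker_mk']
    exact Group.isSolvable_of_comm fun a b ↦ Subtype.ext (mem_center_iff.1 b.2 a)
  refine hM.eq_top_of_map_eq_range (QuotientGroup.mk' (center H)) ?_
  rw [MonoidHom.range_eq_top.2 (QuotientGroup.mk'_surjective _)]
  refine ((hM.map (QuotientGroup.mk'_surjective _)).eq_bot_or_top_of_isSimpleGroup
    hH.2).resolve_left fun hbot ↦ hns ?_
  have : Group.IsSolvable (M.map (QuotientGroup.mk' (center H))) := by
    rw [hbot]; infer_instance
  exact isSolvable_of_isSolvable_map (f := QuotientGroup.mk' (center H)) M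

theorem isQuasisimple_of_isSimpleGroup [IsSimpleGroup H] (hns : ¬ Group.IsSolvable H) :
    IsQuasisimple H := by
  have hcenter : center H ≠ ⊤ := fun h ↦
    hns (Group.isSolvable_of_comm fun a b ↦ mem_center_iff.1 (h ▸ mem_top b) a)
  refine ⟨?_, ?_⟩
  · refine (instNormalCommutator H).eq_bot_or_eq_top.resolve_left fun hbot ↦ hcenter ?_
    exact (commutator_eq_bot_iff_center_eq_top H).1 hbot
  · have : Nontrivial (H ⧸ center H) := QuotientGroup.nontrivial_iff.2 hcenter
    exact IsSimpleGroup.isSimpleGroup_of_surjective _ (QuotientGroup.mk'_surjective (center H))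

end Perfect

theorem commutator_eq_self_of_minimal {K : Subgroup G}
    (hK : Minimal (fun L : Subgroup G ↦ L.IsSubnormal ∧ ¬ Group.IsSolvable L) K) :
    ⁅K, K⁆ = K := by
  refine le_antisymm (commutator_le_self K)
    (hK.2 ⟨?_, fun hs ↦ hK.1.2 ?_⟩ (commutator_le_self K))
  · rw [← map_subtype_commutator]
    exact (instNormalCommutator K).isSubnormal.trans' hK.1.1
  · rw [← map_subtype_commutator] at hs
    have : Group.IsSolvable (commutator K) := Group.isSolvable_of_isSolvable_injective
      (f := (equivMapOfInjective _ _ K.subtype_injective).toMonoidHom) (MulEquiv.injective _)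
    exact Group.isSolvable_of_isSolvable_commutator

section SolComponent

variable [Finite G]

local notation "π" => QuotientGroup.mk' (sol G)

instance isSolvable_ker_mk'_sol : Group.IsSolvable (π).ker := by
  rw [QuotientGroup.ker_mk']
  infer_instance

theorem Subgroup.IsSubnormal.eq_bot_of_isSolvable_of_quotient_sol {N : Subgroup (G ⧸ sol G)}
    (hN : N.IsSubnormal) [Group.IsSolvable N] : N = ⊥ := by
  have := isSolvable_comap (f := π) N
  rw [← map_comap_eq_self_of_surjective (QuotientGroup.mk'_surjective (sol G)) N, eq_bot_iff,
    map_le_iff_le_comap, MonoidHom.comap_bot, QuotientGroup.ker_mk']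
  exact le_sol_of_isSubnormal (hN.comap π)

theorem Subgroup.IsSolComponent.eq_of_le {K L : Subgroup G} (hK : K.IsSolComponent)
    (hL : L.IsSubnormal) (hns : ¬ Group.IsSolvable L) (hLK : L ≤ K) : L = K := by
  obtain ⟨hperf, -, -, hquasi⟩ := hK
  have hmap : L.map π = K.map π := by
    refine le_antisymm (map_mono hLK) (subgroupOf_eq_top.1 (hquasi.eq_top_of_isSubnormal
      (hL.map (QuotientGroup.mk'_surjective _)).subgroupOf fun hs ↦ hns ?_))
    have : Group.IsSolvable (L.map π) := by
      rw [← map_subgroupOf_eq_of_le (map_mono hLK)]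
      exact isSolvable_map _ _
    exact isSolvable_of_isSolvable_map (f := π) L
  have : Group.IsPerfect K := isPerfect_iff.2 hperf
  have : Group.IsSolvable ((π).comp K.subtype).ker := by
    rw [← MonoidHom.comap_ker, QuotientGroup.ker_mk']
    exact isSolvable_subgroupOf K
  refine le_antisymm hLK (subgroupOf_eq_top.1
    (hL.subgroupOf.eq_top_of_map_eq_range ((π).comp K.subtype) ?_))
  rw [← map_map, map_subgroupOf_eq_of_le hLK, MonoidHom.range_comp, range_subtype, hmap]

theorem isSimpleGroup_map_sol_of_minimal {K : Subgroup G}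
    (hK : Minimal (fun L : Subgroup G ↦ L.IsSubnormal ∧ ¬ Group.IsSolvable L) K) :
    IsSimpleGroup (K.map π) := by
  have hKbar : (K.map π).IsSubnormal := hK.1.1.map (QuotientGroup.mk'_surjective _)
  have : Nontrivial (K.map π) := by
    refine (nontrivial_iff_ne_bot _).2 fun hbot ↦ hK.1.2 ?_
    have : Group.IsSolvable (K.map π) := by rw [hbot]; infer_instance
    exact isSolvable_of_isSolvable_map (f := π) K
  refine ⟨fun N hN ↦ ?_⟩
  set N' := N.map (K.map π).subtype
  have hN' : N'.IsSubnormal := hN.isSubnormal.trans' hKbar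
  by_cases hs : Group.IsSolvable N'
  · exact .inl <| (map_eq_bot_iff_of_injective _ (subtype_injective _)).1
      hN'.eq_bot_of_isSolvable_of_quotient_sol
  right
  set L := N'.comap π ⊓ K
  have hNL : N' ≤ L.map π := by
    rintro _ ⟨⟨_, k, hk, rfl⟩, hn, rfl⟩
    exact ⟨k, ⟨⟨_, hn, rfl⟩, hk⟩, rfl⟩
  have hL : L.IsSubnormal ∧ ¬ Group.IsSolvable L := by
    refine ⟨(hN'.comap π).inf hK.1.1, fun h ↦ hs ?_⟩
    have := isSolvable_map π L
    exact isSolvable_of_le hNL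
  rw [eq_top_iff, ← map_subtype_le_map_subtype, ← MonoidHom.range_eq_map, range_subtype,
    map_le_iff_le_comap]
  exact (hK.2 hL inf_le_right).trans inf_le_left

theorem isSolComponent_of_minimal {K : Subgroup G}
    (hK : Minimal (fun L : Subgroup G ↦ L.IsSubnormal ∧ ¬ Group.IsSolvable L) K) :
    K.IsSolComponent := by
  have := isSimpleGroup_map_sol_of_minimal hK
  refine ⟨commutator_eq_self_of_minimal hK, isSubnormalIn_iff_isSubnormal.2 hK.1.1,
    isSubnormalIn_iff_isSubnormal.2 (hK.1.1.map (QuotientGroup.mk'_surjective _)),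
    isQuasisimple_of_isSimpleGroup fun hs ↦ hK.1.2 ?_⟩
  exact isSolvable_of_isSolvable_map (f := π) K

theorem Subgroup.IsSolComponent.minimal {K : Subgroup G} (hK : K.IsSolComponent) :
    Minimal (fun L : Subgroup G ↦ L.IsSubnormal ∧ ¬ Group.IsSolvable L) K := by
  refine ⟨⟨isSubnormalIn_iff_isSubnormal.1 hK.2.1, fun hs ↦ hK.2.2.2.not_isSolvable ?_⟩,
    fun L hL hLK ↦ (hK.eq_of_le hL.1 hL.2 hLK).ge⟩
  exact isSolvable_map π K

theorem isSolComponent_iff_minimal {K : Subgroup G} :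
    K.IsSolComponent ↔
      Minimal (fun L : Subgroup G ↦ L.IsSubnormal ∧ ¬ Group.IsSolvable L) K :=
  ⟨IsSolComponent.minimal, isSolComponent_of_minimal⟩

end SolComponent

end

/-- A subgroup `K` of a finite group `G` is a sol-component of `G` if and only if
`K` is a minimal member, under inclusion, of the set of nonsolvable subnormal
subgroups of `G`. -/
theorem isSolComponent_iff_minimal_nonsolvable_subnormal
    {G : Type*} [Group G] [Finite G] (K : Subgroup G) :
    K.IsSolComponent ↔
      (K.IsSubnormalIn ∧ ¬ IsSolvable K ∧
        ∀ L : Subgroup G, L.IsSubnormalIn → ¬ IsSolvable L → L ≤ K → L = K) := by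
  rw [isSolComponent_iff_minimal]
  constructor
  · rintro ⟨⟨hK, hns⟩, hmin⟩
    exact ⟨Subgroup.isSubnormalIn_iff_isSubnormal.2 hK, hns, fun L hL hLns hLK ↦
      le_antisymm hLK (hmin ⟨Subgroup.isSubnormalIn_iff_isSubnormal.1 hL, hLns⟩ hLK)⟩
  · rintro ⟨hK, hns, hmin⟩
    exact ⟨⟨Subgroup.isSubnormalIn_iff_isSubnormal.1 hK, hns⟩, fun L hL hLK ↦
      (hmin L (Subgroup.isSubnormalIn_iff_isSubnormal.2 hL.1) hL.2 hLK).ge⟩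
end

section
/- Let G be a finite group, K a sol-component of G, and N a subnormal subgroup of G. Then K ≤ N or N ≤ N_G(K). -/
/-!
Pass to `Ḡ = G / sol G`. A component `K̄` of `Ḡ` and a subnormal subgroup `N̄` satisfy
`K̄ ≤ N̄` or `[K̄, N̄] = 1`: climbing a subnormal chain from `K̄` to `Ḡ`, the three subgroups
lemma and `K̄ = [K̄, K̄]` show that `N̄` meets each term in a subgroup centralizing `K̄`.
Both alternatives lift back to `G` because a perfect subgroup `P` with `P ≤ X · sol G`, `X`
subnormal, already lies in `X`: going down a subnormal chain `X ◁ M ◁ ⋯`, the image of `P` in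
`M / X` is perfect and solvable, hence trivial. If `K̄ ≤ N̄` this gives `K ≤ N`; if `N̄`
centralizes `K̄`, then `K^n` and `K` have the same image in `Ḡ` for `n ∈ N`, so `K^n = K`.
-/

open Subgroup

namespace Subgroup

variable {G : Type*} [Group G]

theorem IsSubnormalIn.isSubnormal {H : Subgroup G} (h : H.IsSubnormalIn) : H.IsSubnormal := by
  obtain ⟨n, c, h0, hlast, hc⟩ := h
  have hsub : ∀ i, (c i).IsSubnormal :=
    Fin.reverseInduction (hlast ▸ .top) fun i ih => .step _ _ (hc i).1 ih (hc i).2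
  exact h0 ▸ hsub 0

/-- The recursor of `IsSubnormal` descends from `⊤` to `H`; this climbs from `H` to `⊤`. -/
theorem IsSubnormal.induction_from_bottom {H : Subgroup G} (hH : H.IsSubnormal)
    {motive : Subgroup G → Prop} (base : motive H)
    (step : ∀ X Y, H ≤ X → X ≤ Y → (X.subgroupOf Y).Normal → motive X → motive Y) :
    motive ⊤ := by
  obtain ⟨n, f, hmono, hnormal, h0, hn⟩ := hH.exists_chain
  have hchain : ∀ i, motive (f i) := by
    intro i
    induction i with
    | zero => exact h0 ▸ base
    | succ i ih => exact step _ _ (h0 ▸ hmono i.zero_le) (hmono i.le_succ) (hnormal i) ih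
  exact hn ▸ hchain n

theorem sup_inf_le_assoc_of_le {A B C : Subgroup G} [B.Normal] (h : A ≤ C) :
    (A ⊔ B) ⊓ C ≤ A ⊔ B ⊓ C := by
  intro x hx
  obtain ⟨hxAB, hxC⟩ := mem_inf.mp hx
  rw [← SetLike.mem_coe, mul_normal] at hxAB
  obtain ⟨a, ha, b, hb, rfl⟩ := hxAB
  have hbC : b ∈ C := by simpa using mul_mem (inv_mem (h ha)) hxC
  exact mul_mem (mem_sup_left ha) (mem_sup_right ⟨hb, hbC⟩)

theorem eq_bot_of_le_of_isSolvable {P T : Subgroup G} [Group.IsPerfect P] [Group.IsSolvable T]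
    (h : P ≤ T) : P = ⊥ := by
  have : Group.IsSolvable P := Group.isSolvable_of_isSolvable_injective (inclusion_injective h)
  have : Subsingleton P := not_nontrivial_iff_subsingleton.mp fun _ =>
    Group.IsPerfect.not_isSolvable P ‹_›
  exact eq_bot_of_subsingleton P

theorem le_of_le_sup_of_isSolvable {P N T : Subgroup G} [N.Normal] [Group.IsPerfect P]
    [Group.IsSolvable T] (h : P ≤ N ⊔ T) : P ≤ N := by
  have : Group.IsSolvable (T.map (QuotientGroup.mk' N)) :=
    Group.isSolvable_of_surjective ((QuotientGroup.mk' N).subgroupMap_surjective T)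
  have : Group.IsPerfect (P.map (QuotientGroup.mk' N)) := Group.IsPerfect.map _
  have hmap : P.map (QuotientGroup.mk' N) ≤ T.map (QuotientGroup.mk' N) := by
    rw [map_le_iff_le_comap, QuotientGroup.comap_map_mk']
    exact h
  have hbot := eq_bot_of_le_of_isSolvable hmap
  rwa [map_eq_bot_iff, QuotientGroup.ker_mk'] at hbot

theorem le_of_le_sup_of_le_normalizer {P N T : Subgroup G} [Group.IsPerfect P]
    [Group.IsSolvable T] (hT : T ≤ normalizer (N : Set G)) (h : P ≤ N ⊔ T) : P ≤ N := by
  set M := normalizer (N : Set G)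
  have hPM : P ≤ M := h.trans (sup_le le_normalizer hT)
  have : Group.IsPerfect (P.subgroupOf M) :=
    Group.IsPerfect.ofSurjective (f := (subgroupOfEquivOfLe hPM).symm.toMonoidHom)
      (subgroupOfEquivOfLe hPM).symm.surjective
  have : Group.IsSolvable (T.subgroupOf M) :=
    Group.isSolvable_of_isSolvable_injective (f := (subgroupOfEquivOfLe hT).toMonoidHom)
      (subgroupOfEquivOfLe hT).injective
  have hle : P.subgroupOf M ≤ N.subgroupOf M ⊔ T.subgroupOf M := by
    rw [← subgroupOf_sup le_normalizer hT]
    exact subgroupOf_mono M h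
  have hPN := map_mono (f := M.subtype) (le_of_le_sup_of_isSolvable hle)
  rw [subgroupOf_map_subtype, subgroupOf_map_subtype, inf_of_le_left hPM] at hPN
  exact hPN.trans inf_le_left

theorem IsSubnormal.le_of_le_sup_of_isSolvable {P N S : Subgroup G} [Group.IsPerfect P]
    [S.Normal] [Group.IsSolvable S] (hN : N.IsSubnormal) (h : P ≤ N ⊔ S) : P ≤ N := by
  induction hN with
  | top => exact le_top
  | step N M hNM _ hNormal ih =>
    have hPM : P ≤ M := ih (h.trans (sup_le_sup_right hNM S))
    have : Group.IsSolvable ↥(S ⊓ M) :=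
      Group.isSolvable_of_isSolvable_injective (inclusion_injective inf_le_left)
    have hT : S ⊓ M ≤ normalizer (N : Set G) :=
      inf_le_right.trans ((normal_subgroupOf_iff_le_normalizer hNM).mp hNormal)
    exact le_of_le_sup_of_le_normalizer hT
      ((le_inf h hPM).trans (sup_inf_le_assoc_of_le hNM))

theorem IsSubnormal.le_of_map_mk'_le {P N S : Subgroup G} [Group.IsPerfect P]
    [S.Normal] [Group.IsSolvable S] (hN : N.IsSubnormal)
    (h : P.map (QuotientGroup.mk' S) ≤ N.map (QuotientGroup.mk' S)) : P ≤ N := by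
  rw [map_le_iff_le_comap, QuotientGroup.comap_map_mk', sup_comm] at h
  exact hN.le_of_le_sup_of_isSolvable h

theorem map_map_conj_eq_of_mem_normalizer {G' : Type*} [Group G'] (f : G →* G') {H : Subgroup G}
    {g : G} (hg : f g ∈ normalizer (H.map f : Set G')) :
    (H.map (MulAut.conj g : G →* G)).map f = H.map f := by
  have hcomm : f.comp (MulAut.conj g : G →* G) = (MulAut.conj (f g) : G' →* G').comp f := by
    ext x
    simp
  rw [map_map, hcomm, ← map_map, mem_normalizer_iff_map_conj_eq.mp hg]

theorem isSolvable_sup {H N : Subgroup G} [N.Normal] [Group.IsSolvable H] [Group.IsSolvable N] :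
    Group.IsSolvable ↥(H ⊔ N) := by
  rw [Group.isSolvable_iff_subgroup_quotient (N.subgroupOf (H ⊔ N))]
  let eN := subgroupOfEquivOfLe (le_sup_right : N ≤ H ⊔ N)
  let eQ := QuotientGroup.quotientInfEquivProdNormalQuotient H N
  exact ⟨Group.isSolvable_of_isSolvable_injective (f := eN.toMonoidHom) eN.injective,
    Group.isSolvable_of_surjective (f := eQ.toMonoidHom) eQ.surjective⟩

end Subgroup

theorem isSolvable_sol_s1 (G : Type*) [Group G] [Finite G] : Group.IsSolvable (sol G) := by
  obtain ⟨R, ⟨hRnormal, hRsolv⟩, hRmax⟩ :=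
    (Set.toFinite {R : Subgroup G | R.Normal ∧ Group.IsSolvable R}).exists_maximal
      ⟨⊥, normal_bot, inferInstance⟩
  have hle : ∀ Q : Subgroup G, Q.Normal → Group.IsSolvable Q → Q ≤ R := fun Q _ _ =>
    le_sup_right.trans (hRmax ⟨inferInstance, isSolvable_sup⟩ le_sup_left)
  have hsol : sol G ≤ R := by
    rw [sol, closure_le]
    rintro x ⟨Q, hQ, hQsolv, hx⟩
    exact hle Q hQ hQsolv hx
  exact Group.isSolvable_of_isSolvable_injective (inclusion_injective hsol)

namespace IsQuasisimple

theorem eq_top_or_le_center {Q : Type*} [Group Q] (hQ : IsQuasisimple Q) (A : Subgroup Q)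
    [A.Normal] : A = ⊤ ∨ A ≤ center Q := by
  have : Group.IsPerfect Q := ⟨hQ.1⟩
  have : Group.IsSolvable (center Q) :=
    Group.isSolvable_of_comm fun a b => Subtype.ext (mem_center_iff.mp b.2 a)
  have := hQ.2
  rcases IsSimpleGroup.eq_bot_or_eq_top_of_normal _ (‹A.Normal›.map _
    (QuotientGroup.mk'_surjective (center Q))) with h | h
  · rw [Subgroup.map_eq_bot_iff, QuotientGroup.ker_mk'] at h
    exact .inr h
  · have htop : ⊤ ≤ A ⊔ center Q := by
      rw [sup_comm, ← QuotientGroup.comap_map_mk', h, comap_top]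
    exact .inl (top_le_iff.mp (le_of_le_sup_of_isSolvable htop))

variable {G : Type*} [Group G]

theorem le_or_inf_le_centralizer {K N : Subgroup G} (hK : IsQuasisimple K)
    (hKN : K ≤ normalizer (N : Set G)) : K ≤ N ∨ N ⊓ K ≤ centralizer (K : Set G) := by
  have := normal_subgroupOf_of_le_normalizer hKN
  refine (hK.eq_top_or_le_center (N.subgroupOf K)).imp subgroupOf_eq_top.mp fun h => ?_
  intro x hx
  obtain ⟨hxN, hxK⟩ := mem_inf.mp hx
  rw [mem_centralizer_iff]
  intro k hk
  exact congrArg Subtype.val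
    (mem_center_iff.mp (h (mem_subgroupOf.mpr hxN : (⟨x, hxK⟩ : K) ∈ _)) ⟨k, hk⟩)

theorem le_or_le_centralizer_of_le_normalizer {K N : Subgroup G} (hK : IsQuasisimple K)
    (hKsn : K.IsSubnormal) (hKN : K ≤ normalizer (N : Set G)) :
    K ≤ N ∨ N ≤ centralizer (K : Set G) := by
  refine (hK.le_or_inf_le_centralizer hKN).imp_right fun hbase => ?_
  have hperf : ⁅K, K⁆ = K := isPerfect_iff.mp ⟨hK.1⟩
  suffices N ⊓ ⊤ ≤ centralizer (K : Set G) by rwa [inf_top_eq] at this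
  refine hKsn.induction_from_bottom (motive := fun X => N ⊓ X ≤ centralizer (K : Set G)) hbase
    fun X Y hKX hXY hXYnormal ih => ?_
  have hYX : Y ≤ normalizer (X : Set G) :=
    (normal_subgroupOf_iff_le_normalizer hXY).mp hXYnormal
  have hcomm : ⁅K, N ⊓ Y⁆ ≤ N ⊓ X := by
    rw [commutator_le]
    intro k hk y hy
    obtain ⟨hyN, hyY⟩ := mem_inf.mp hy
    refine mem_inf.mpr ⟨mul_mem ((mem_normalizer_iff.mp (hKN hk) y).mp hyN) (inv_mem hyN), ?_⟩
    rw [commutatorElement_def, mul_assoc k, mul_assoc k]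
    exact mul_mem (hKX hk) ((mem_normalizer_iff.mp (hYX hyY) k⁻¹).mp (inv_mem (hKX hk)))
  have h1 : ⁅⁅K, N ⊓ Y⁆, K⁆ = ⊥ := commutator_eq_bot_iff_le_centralizer.mpr (hcomm.trans ih)
  have h2 : ⁅⁅N ⊓ Y, K⁆, K⁆ = ⊥ := by rwa [commutator_comm (N ⊓ Y)]
  have h3 := commutator_commutator_eq_bot_of_rotate h1 h2
  rw [hperf, commutator_eq_bot_iff_le_centralizer] at h3
  exact le_centralizer_iff.mp h3

theorem le_or_le_centralizer {K N : Subgroup G} (hK : IsQuasisimple K) (hKsn : K.IsSubnormal)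
    (hN : N.IsSubnormal) : K ≤ N ∨ N ≤ centralizer (K : Set G) := by
  induction hN with
  | top => exact .inl le_top
  | step N M hNM _ hNormal ih =>
    rcases ih with hKM | hMK
    · exact hK.le_or_le_centralizer_of_le_normalizer hKsn
        (hKM.trans ((normal_subgroupOf_iff_le_normalizer hNM).mp hNormal))
    · exact .inr (hNM.trans hMK)

end IsQuasisimple

/-- If `K` is a sol-component of a finite group `G` and `N` is a subnormal subgroup
of `G`, then `K ≤ N` or `N ≤ N_G(K)`. -/
theorem solComponent_le_or_le_normalizer
    {G : Type*} [Group G] [Finite G] {K N : Subgroup G}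
    (hK : K.IsSolComponent) (hN : N.IsSubnormalIn) :
    K ≤ N ∨ N ≤ Subgroup.normalizer (K : Set G) := by
  obtain ⟨hKperf, hKsn, hKbarsn, hKbarq⟩ := hK
  have : Group.IsPerfect K := isPerfect_iff.mpr hKperf
  have := isSolvable_sol_s1 G
  have hKsn := hKsn.isSubnormal
  have hNsn := hN.isSubnormal
  set π := QuotientGroup.mk' (sol G)
  rcases hKbarq.le_or_le_centralizer hKbarsn.isSubnormal
      (hNsn.map (QuotientGroup.mk'_surjective _)) with h | h
  · exact .inl (hNsn.le_of_map_mk'_le h)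
  · refine .inr fun n hn => mem_normalizer_iff_map_conj_eq.mpr ?_
    have : Group.IsPerfect (K.map (MulAut.conj n : G →* G)) := Group.IsPerfect.map _
    have hmap : (K.map (MulAut.conj n : G →* G)).map π = K.map π :=
      map_map_conj_eq_of_mem_normalizer π (centralizer_le_normalizer _ (h ⟨n, hn, rfl⟩))
    exact le_antisymm (hKsn.le_of_map_mk'_le hmap.le)
      ((hKsn.map (MulAut.conj n).surjective).le_of_map_mk'_le hmap.ge)
end

section
/- Suppose a finite group A acts coprimely on a finite group G and A centralizes the generalized Fitting subgroup F*(G). Then A centralizes G, i.e., [G, A] = 1. -/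
/-- The subgroup of fixed points of the action of `a` on `G`. -/
def fixedSub {A : Type*} (G : Type*) [Group A] [Group G] [MulDistribMulAction A G]
    (a : A) : Subgroup G where
  carrier := {g : G | a • g = g}
  one_mem' := smul_one a
  mul_mem' := by
    intro x y hx hy
    simp only [Set.mem_setOf_eq] at *
    rw [smul_mul', hx, hy]
  inv_mem' := by
    intro x hx
    simp only [Set.mem_setOf_eq] at *
    rw [smul_inv', hx]

/-- The commutator `[G, A]` of a group `G` with a group `A` acting on it:
the subgroup generated by all `g⁻¹ • (a • g)`. -/
def actCommutator (A G : Type*) [Group A] [Group G] [MulDistribMulAction A G] :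
    Subgroup G :=
  Subgroup.closure {x : G | ∃ (g : G) (a : A), x = g⁻¹ * (a • g)}

namespace Subgroup

variable {G : Type*} [Group G]

theorem isSubnormalIn_iff_isSubnormal_s4 {H : Subgroup G} : H.IsSubnormalIn ↔ H.IsSubnormal := by
  constructor
  · rintro ⟨n, c, rfl, hlast, hstep⟩
    induction n with
    | zero => exact hlast ▸ IsSubnormal.top
    | succ n ih =>
      have htail : (c 1).IsSubnormal := ih (fun i => c i.succ) hlast (fun i => hstep i.succ)
      exact IsSubnormal.step _ _ (hstep 0).1 htail (hstep 0).2
  · intro h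
    induction h with
    | top => exact ⟨0, fun _ => ⊤, rfl, rfl, fun i => i.elim0⟩
    | step H K hHK _ hN ih =>
      obtain ⟨n, c, rfl, hlast, hstep⟩ := ih
      refine ⟨n + 1, Fin.cons H c, rfl, by rwa [← Fin.succ_last, Fin.cons_succ], ?_⟩
      intro i
      induction i using Fin.cases with
      | zero => exact ⟨hHK, hN⟩
      | succ j => rw [← Fin.succ_castSucc, Fin.cons_succ, Fin.cons_succ]; exact hstep j

theorem closure_characteristic {s : Set G} (hs : ∀ (e : G ≃* G), ∀ x ∈ s, e x ∈ s) :
    (closure s).Characteristic := by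
  refine characteristic_iff_map_le.mpr fun e => ?_
  rw [MonoidHom.map_closure, closure_le]
  rintro _ ⟨x, hx, rfl⟩
  exact subset_closure (hs e x hx)

theorem map_center_mulEquiv {H K : Type*} [Group H] [Group K] (e : H ≃* K) :
    (center H).map e.toMonoidHom = center K := by
  ext k
  rw [mem_map_equiv]
  exact MulEquivClass.apply_mem_center_iff e.symm

end Subgroup

theorem IsQuasisimple.of_mulEquiv {H K : Type*} [Group H] [Group K] (e : H ≃* K)
    (h : IsQuasisimple H) : IsQuasisimple K := by
  obtain ⟨hperf, hsimple⟩ := h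
  refine ⟨?_, ?_⟩
  · rw [← Subgroup.map_top_of_surjective e.toMonoidHom e.surjective, ← Subgroup.map_commutator,
      hperf]
  · exact (QuotientGroup.congr _ _ e (Subgroup.map_center_mulEquiv e)).isSimpleGroup_congr.mp
      hsimple

theorem Subgroup.IsComponent.map_mulEquiv {G : Type*} [Group G] (e : G ≃* G) {K : Subgroup G}
    (h : K.IsComponent) : (K.map e.toMonoidHom).IsComponent := by
  obtain ⟨hsn, hq⟩ := h
  refine ⟨?_, hq.of_mulEquiv (K.equivMapOfInjective _ e.injective)⟩
  rw [Subgroup.isSubnormalIn_iff_isSubnormal_s4] at hsn ⊢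
  exact hsn.map e.surjective

section Characteristic

variable (G : Type*) [Group G]

instance fitting_characteristic : (fitting G).Characteristic :=
  Subgroup.closure_characteristic fun e _ ⟨N, hN, hnil, hx⟩ =>
    ⟨N.map e.toMonoidHom, hN.map _ e.surjective,
      (Group.isNilpotent_congr (N.equivMapOfInjective _ e.injective)).mp hnil,
      Subgroup.mem_map_of_mem _ hx⟩

instance layer_characteristic : (layer G).Characteristic :=
  Subgroup.closure_characteristic fun e _ ⟨K, hK, hx⟩ =>
    ⟨K.map e.toMonoidHom, hK.map_mulEquiv e, Subgroup.mem_map_of_mem _ hx⟩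

instance pCore_characteristic (p : ℕ) : (pCore p G).Characteristic :=
  Subgroup.closure_characteristic fun e _ ⟨N, hN, hp, hx⟩ =>
    ⟨N.map e.toMonoidHom, hN.map _ e.surjective, hp.map _, Subgroup.mem_map_of_mem _ hx⟩

instance Fstar_characteristic : (Fstar G).Characteristic :=
  Subgroup.characteristic_sup

end Characteristic

section PCore

variable {G : Type*} [Group G] {p : ℕ}

theorem le_pCore_of_normal {N : Subgroup G} [hN : N.Normal] (hp : IsPGroup p N) :
    N ≤ pCore p G :=
  fun _ hx => Subgroup.subset_closure ⟨N, hN, hp, hx⟩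

theorem exists_normal_isPGroup_of_mem_pCore {x : G} (hx : x ∈ pCore p G) :
    ∃ N : Subgroup G, N.Normal ∧ IsPGroup p N ∧ x ∈ N := by
  induction hx using Subgroup.closure_induction with
  | mem x hx => exact hx
  | one => exact ⟨⊥, inferInstance, IsPGroup.of_bot, Subgroup.one_mem _⟩
  | mul x y _ _ hx hy =>
    obtain ⟨N₁, hN₁, hp₁, hx⟩ := hx
    obtain ⟨N₂, hN₂, hp₂, hy⟩ := hy
    exact ⟨N₁ ⊔ N₂, Subgroup.sup_normal _ _, hp₁.to_sup_of_normal_right hp₂,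
      Subgroup.mul_mem _ (Subgroup.mem_sup_left hx) (Subgroup.mem_sup_right hy)⟩
  | inv x _ hx =>
    obtain ⟨N, hN, hp, hx⟩ := hx
    exact ⟨N, hN, hp, N.inv_mem hx⟩

theorem pCore_isPGroup : IsPGroup p (pCore p G) := by
  rintro ⟨x, hx⟩
  obtain ⟨N, -, hp, hxN⟩ := exists_normal_isPGroup_of_mem_pCore hx
  obtain ⟨k, hk⟩ := hp ⟨x, hxN⟩
  exact ⟨k, Subtype.ext (by simpa using congrArg Subtype.val hk)⟩

theorem pCore_le_fitting [Finite G] [Fact p.Prime] : pCore p G ≤ fitting G :=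
  fun _ hx => Subgroup.subset_closure ⟨pCore p G, inferInstance, pCore_isPGroup.isNilpotent, hx⟩

theorem Subgroup.IsSubnormal.le_pCore [Finite G] {P : Subgroup G} (hP : P.IsSubnormal)
    (hp : IsPGroup p P) : P ≤ pCore p G := by
  induction hcard : Nat.card G using Nat.strong_induction_on generalizing G with
  | _ n ih =>
  obtain rfl | ⟨K, hK, hPK, hKG⟩ := hP.lt_normal
  · exact le_pCore_of_normal hp
  have hKcard : Nat.card K < n := hcard ▸ (Subgroup.card_le_card_group K).lt_of_ne
    fun h => hKG.ne ((Subgroup.card_eq_iff_eq_top K).mp h)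
  have hPK' : P.subgroupOf K ≤ pCore p K :=
    ih _ hKcard hP.subgroupOf (hp.of_equiv (Subgroup.subgroupOfEquivOfLe hPK).symm) rfl
  calc P = (P.subgroupOf K).map K.subtype := (Subgroup.map_subgroupOf_eq_of_le hPK).symm
    _ ≤ (pCore p K).map K.subtype := Subgroup.map_mono hPK'
    -- `O_p(K)` is characteristic in the normal subgroup `K`, hence normal in `G`.
    _ ≤ pCore p G := le_pCore_of_normal (pCore_isPGroup.map _)

end PCore

theorem Subgroup.eq_top_of_forall_exists_sylow_le {G : Type*} [Group G] [Finite G]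
    {H : Subgroup G} (h : ∀ (p : ℕ) [Fact p.Prime], ∃ P : Sylow p G, (P : Subgroup G) ≤ H) :
    H = ⊤ := by
  rw [← index_eq_one, Nat.eq_one_iff_not_exists_prime_dvd]
  intro p hp hdvd
  have := Fact.mk hp
  obtain ⟨P, hPH⟩ := h p
  exact P.not_dvd_index (hdvd.trans (index_dvd_of_le hPH))

theorem Subgroup.IsSubnormal.le_fitting {G : Type*} [Group G] [Finite G] {S : Subgroup G}
    (hS : S.IsSubnormal) (hnil : Group.IsNilpotent S) : S ≤ fitting G := by
  rw [← Subgroup.subgroupOf_eq_top]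
  refine Subgroup.eq_top_of_forall_exists_sylow_le fun p _ => ⟨default, fun x hx => ?_⟩
  have hP : ((default : Sylow p S) : Subgroup S).map S.subtype ≤ pCore p G :=
    (Subgroup.Normal.isSubnormal inferInstance |>.trans' hS).le_pCore
      ((default : Sylow p S).isPGroup'.map _)
  exact pCore_le_fitting (hP ⟨x, hx, rfl⟩)

section CentralCommutator

variable {S : Type*} [Group S]

theorem isNilpotent_of_commutator_le_center
    (h : ⁅(⊤ : Subgroup S), ⊤⁆ ≤ Subgroup.center S) : Group.IsNilpotent S :=
  ⟨⟨2, eq_top_iff.mpr fun _ _ => Subgroup.mem_upperCentralSeries_succ_iff.mpr fun _ => by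
    rw [Subgroup.upperCentralSeries_one]
    exact h (Subgroup.commutator_mem_commutator trivial trivial)⟩⟩

theorem isQuasisimple_of_forall_normal_le_center
    (hperf : ⁅(⊤ : Subgroup S), ⊤⁆ = (⊤ : Subgroup S)) (hZ : Subgroup.center S ≠ ⊤)
    (h : ∀ T : Subgroup S, T.Normal → T ≠ ⊤ → T ≤ Subgroup.center S) : IsQuasisimple S := by
  refine ⟨hperf, ?_⟩
  have : Nontrivial (S ⧸ Subgroup.center S) := QuotientGroup.nontrivial_iff.mpr hZ
  refine ⟨fun W hW => ?_⟩
  have hW_eq := Subgroup.map_comap_eq_self_of_surjective (QuotientGroup.mk'_surjective _) W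
  by_cases hT : W.comap (QuotientGroup.mk' (Subgroup.center S)) = ⊤
  · right
    rw [← hW_eq, hT, Subgroup.map_top_of_surjective _ (QuotientGroup.mk'_surjective _)]
  · left
    rw [← hW_eq, Subgroup.map_eq_bot_iff, QuotientGroup.ker_mk']
    exact h _ (hW.comap _) hT

end CentralCommutator

theorem centralizer_Fstar_le (G : Type*) [Group G] [Finite G] :
    Subgroup.centralizer (Fstar G : Set G) ≤ Fstar G := by
  by_contra hC
  obtain ⟨S, ⟨hSC, hSF, hS⟩, hmin⟩ := wellFounded_lt.has_min
    {S : Subgroup G | S ≤ Subgroup.centralizer (Fstar G : Set G) ∧ ¬S ≤ Fstar G ∧ S.IsSubnormal}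
    ⟨_, le_rfl, hC, Subgroup.Normal.isSubnormal inferInstance⟩
  have hcentral : ∀ T : Subgroup S, T.Normal → T ≠ ⊤ → T ≤ Subgroup.center S := by
    intro T hT hTS t ht
    have hTF : T.map S.subtype ≤ Fstar G := by
      by_contra hTF
      refine hmin _ ⟨(Subgroup.map_subtype_le T).trans hSC, hTF, hT.isSubnormal.trans' hS⟩ ?_
      simpa only [← MonoidHom.range_eq_map, Subgroup.range_subtype] using
        Subgroup.map_subtype_lt_map_subtype.mpr hTS.lt_top
    exact Subgroup.mem_center_iff.mpr fun g =>
      Subtype.ext (Subgroup.mem_centralizer_iff.mp (hSC g.2) t (hTF ⟨t, ht, rfl⟩)).symm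
  by_cases hab : ⁅(⊤ : Subgroup S), ⊤⁆ ≤ Subgroup.center S
  · exact hSF ((hS.le_fitting (isNilpotent_of_commutator_le_center hab)).trans le_sup_left)
  have hperf : ⁅(⊤ : Subgroup S), ⊤⁆ = (⊤ : Subgroup S) := by
    by_contra hne
    exact hab (hcentral _ inferInstance hne)
  have hcomp : S.IsComponent := ⟨Subgroup.isSubnormalIn_iff_isSubnormal_s4.mpr hS,
    isQuasisimple_of_forall_normal_le_center hperf (fun hZ => hab (le_top.trans_eq hZ.symm))
      hcentral⟩
  exact hSF (fun x hx => le_sup_right (a := fitting G) (Subgroup.subset_closure ⟨S, hcomp, hx⟩))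

section CoprimeAction

variable {A G : Type*} [Group A] [Group G] [MulDistribMulAction A G]

theorem inv_mul_smul_mem_centralizer {N : Subgroup G} [hN : N.Normal]
    (hfix : ∀ a : A, ∀ x ∈ N, a • x = x) (a : A) (g : G) :
    g⁻¹ * a • g ∈ Subgroup.centralizer (N : Set G) := by
  refine Subgroup.mem_centralizer_iff.mpr fun x hx => ?_
  have hconj : a • (g * x * g⁻¹) = g * x * g⁻¹ := hfix a _ (hN.conj_mem x hx g)
  rw [smul_mul', smul_mul', smul_inv', hfix a x hx] at hconj
  calc x * (g⁻¹ * a • g) = g⁻¹ * (g * x * g⁻¹) * a • g := by group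
    _ = g⁻¹ * (a • g * x * (a • g)⁻¹) * a • g := by rw [hconj]
    _ = g⁻¹ * a • g * x := by group

theorem smul_eq_self_of_centralizer_le {N : Subgroup G} [N.Normal]
    (hN : Subgroup.centralizer (N : Set G) ≤ N) (hcop : (Nat.card A).Coprime (Nat.card G))
    (hfix : ∀ a : A, ∀ x ∈ N, a • x = x) (a : A) (g : G) : a • g = g := by
  set c := g⁻¹ * a • g
  have hc : a • c = c := hfix a c (hN (inv_mul_smul_mem_centralizer hfix a g))
  have hpow : ∀ k : ℕ, a ^ k • g = g * c ^ k := by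
    intro k
    induction k with
    | zero => simp
    | succ k ih => rw [pow_succ', mul_smul, ih, smul_mul', smul_pow', hc, pow_succ', ← mul_assoc,
        mul_inv_cancel_left]
  have hc_order : c ^ orderOf a = 1 := by
    simpa [pow_orderOf_eq_one] using (hpow (orderOf a)).symm
  have hc_one : c = 1 := orderOf_eq_one_iff.mp <| Nat.eq_one_of_dvd_coprimes hcop
    ((orderOf_dvd_of_pow_eq_one hc_order).trans (orderOf_dvd_natCard a)) (orderOf_dvd_natCard c)
  exact (inv_mul_eq_one.mp hc_one).symm

end CoprimeAction

theorem actCommutator_eq_bot_of_centralizes_Fstar_general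
    {A G : Type*} [Group A] [Group G] [Finite G] [MulDistribMulAction A G]
    (hcop : (Nat.card A).Coprime (Nat.card G))
    (hcent : ∀ (a : A), ∀ x ∈ Fstar G, a • x = x) :
    actCommutator A G = ⊥ := by
  rw [eq_bot_iff, actCommutator, Subgroup.closure_le]
  rintro _ ⟨g, a, rfl⟩
  rw [smul_eq_self_of_centralizer_le (centralizer_Fstar_le G) hcop hcent a g, inv_mul_cancel]
  exact one_mem _

/-- If a finite group `A` acts coprimely on a finite group `G` and `A` centralizes
the generalized Fitting subgroup `F*(G)`, then `[G, A] = 1`. -/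
theorem actCommutator_eq_bot_of_centralizes_Fstar
    {A G : Type*} [Group A] [Group G] [Finite A] [Finite G] [MulDistribMulAction A G]
    (hcop : (Nat.card A).Coprime (Nat.card G))
    (hsol : IsSolvable A ∨ IsSolvable G)
    (hcent : ∀ (a : A), ∀ x ∈ Fstar G, a • x = x) :
    actCommutator A G = ⊥ :=
  actCommutator_eq_bot_of_centralizes_Fstar_general hcop hcent
end

section
/- Suppose a finite group A acts coprimely on a finite p-group G, where p is a prime, that A centralizes every characteristic abelian subgroup of G, and that G = [G, A]. Then G' = Φ(G) = Z(G) = C_G(A), where G' is the derived subgroup and Φ(G) the Frattini subgroup of G. -/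
/-!
A characteristic abelian subgroup `U` is normal and centralized by `A`, so each generator
`g⁻¹ (a • g)` of `[G, A] = G` centralizes it: `U` is central. For `U = G' ∩ Z₂(G)`, abelian by
the three subgroups lemma, this forces class at most two: otherwise the last term of the lower
central series outside `Z(G)` would lie in `G' ∩ Z₂(G)`. For `U = Z(Φ(G))` it gives
`Φ(G) ≤ Z(G)`: in class two, an element `t` with `t ^ p` central commutes with every commutator
and every `p`-th power, and any subgroup containing all of these contains `Φ(G)`.

The norm `g ↦ ∏ₐ a • g` into the abelianization kills every `g⁻¹ (a • g)`, hence all of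
`[G, A] = G`, while on a fixed point it is the `|A|`-th power; as `|A|` is prime to `|G|`,
`C_G(A) ≤ G'`. With `G' ≤ Φ(G)`, true in every nilpotent group, this closes the cycle
`Z(G) ≤ C_G(A) ≤ G' ≤ Φ(G) ≤ Z(G)`.
-/

open Subgroup
open scoped commutatorElement

section

variable {G : Type*} [Group G]

theorem commutatorElement_mul_right_of_mem_center {x g h : G} (hxh : ⁅x, h⁆ ∈ center G) :
    ⁅x, g * h⁆ = ⁅x, g⁆ * ⁅x, h⁆ := by
  calc ⁅x, g * h⁆ = ⁅x, g⁆ * (g * ⁅x, h⁆ * g⁻¹) := by simp only [commutatorElement_def]; group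
    _ = ⁅x, g⁆ * ⁅x, h⁆ := by rw [mem_center_iff.mp hxh g, mul_inv_cancel_right]

theorem commutatorElement_pow_right_of_commutator_le_center (hG : commutator G ≤ center G)
    (x g : G) (n : ℕ) : ⁅x, g ^ n⁆ = ⁅x, g⁆ ^ n := by
  induction n with
  | zero => simp
  | succ n ih =>
    rw [pow_succ, commutatorElement_mul_right_of_mem_center
      (hG (commutator_mem_commutator (mem_top x) (mem_top g))), ih, pow_succ]

theorem commutatorElement_pow_left_of_commutator_le_center (hG : commutator G ≤ center G)
    (x g : G) (n : ℕ) : ⁅x ^ n, g⁆ = ⁅x, g⁆ ^ n := by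
  rw [← commutatorElement_inv, commutatorElement_pow_right_of_commutator_le_center hG,
    ← inv_pow, commutatorElement_inv]

theorem commutator_commutator_upperCentralSeries_two_eq_bot :
    ⁅commutator G, Subgroup.upperCentralSeries G 2⁆ = ⊥ := by
  have hZ2 : ⁅⁅Subgroup.upperCentralSeries G 2, (⊤ : Subgroup G)⁆, (⊤ : Subgroup G)⁆ = ⊥ := by
    rw [eq_bot_iff, ← commutator_eq_bot_iff_le_centralizer.mpr
      (center_le_centralizer ((⊤ : Subgroup G) : Set G))]
    refine commutator_mono ?_ le_rfl
    rw [← Subgroup.upperCentralSeries_one]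
    exact Subgroup.commutator_upperCentralSeries_top_le G 1
  rw [_root_.commutator_def]
  exact commutator_commutator_eq_bot_of_rotate (by rwa [commutator_comm ⊤]) hZ2

theorem commutator_le_center_of_inf_upperCentralSeries_two_le [Group.IsNilpotent G]
    (h : commutator G ⊓ Subgroup.upperCentralSeries G 2 ≤ center G) : commutator G ≤ center G := by
  obtain ⟨n, hn⟩ := Subgroup.nilpotent_iff_lowerCentralSeries.mp ‹Group.IsNilpotent G›
  rw [← top_lowerCentralSeries_one]
  refine Nat.decreasingInduction
    (motive := fun m _ => (⊤ : Subgroup G).lowerCentralSeries (m + 1) ≤ center G)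
    (fun k _ hk t ht => h (mem_inf.mpr ⟨?_, ?_⟩)) ?_ (Nat.zero_le n)
  · rw [← top_lowerCentralSeries_one]
    exact Subgroup.lowerCentralSeries_antitone ⊤ (Nat.le_add_left 1 k) ht
  · rw [Subgroup.mem_upperCentralSeries_succ_iff, Subgroup.upperCentralSeries_one]
    exact fun g => hk (commutator_mem_commutator ht (mem_top g))
  · refine (Subgroup.lowerCentralSeries_antitone ⊤ n.le_succ).trans ?_
    rw [hn]
    exact bot_le

theorem zpow_mem_iff_of_not_dvd {H : Subgroup G} {p : ℕ} (hp : p.Prime) {g : G}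
    (hgp : g ^ p ∈ H) {k : ℤ} (hk : ¬ (p : ℤ) ∣ k) : g ^ k ∈ H ↔ g ∈ H := by
  refine ⟨fun hgk => ?_, fun hg => H.zpow_mem hg k⟩
  obtain ⟨a, b, hab⟩ : IsCoprime (p : ℤ) k :=
    (Nat.prime_iff_prime_int.mp hp).coprime_iff_not_dvd.mpr hk
  have hg : g = (g ^ p) ^ a * (g ^ k) ^ b := by
    rw [← zpow_natCast, ← zpow_mul, ← zpow_mul, ← zpow_add, mul_comm, mul_comm k, hab, zpow_one]
  rw [hg]
  exact H.mul_mem (H.zpow_mem hgp a) (H.zpow_mem hgk b)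

theorem isCoatom_of_forall_lt_mem {p : ℕ} (hp : p.Prime) {M : Subgroup G} [M.Normal]
    (hpow : ∀ g : G, g ^ p ∈ M) {v : G} (hv : v ∉ M) (hmax : ∀ X, M < X → v ∈ X) :
    IsCoatom M := by
  refine ⟨fun hM => hv (hM ▸ mem_top v), fun X hMX => (eq_top_iff' X).mpr fun g => ?_⟩
  by_cases hg : g ∈ M
  · exact hMX.le hg
  have hvg : v ∈ M ⊔ zpowers g := hmax _ (left_lt_sup.mpr (by rwa [zpowers_le]))
  rw [← SetLike.mem_coe, normal_mul, Set.mem_mul] at hvg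
  obtain ⟨m, hm, _, hgk, hmv⟩ := hvg
  obtain ⟨k, rfl⟩ := mem_zpowers_iff.mp hgk
  have hk : ¬ (p : ℤ) ∣ k := by
    rintro ⟨j, rfl⟩
    rw [zpow_mul, zpow_natCast] at hmv
    exact hv (hmv ▸ M.mul_mem hm (M.zpow_mem (hpow g) j))
  have hgk : g ^ k ∈ X := by
    rw [eq_inv_mul_of_mul_eq hmv]
    exact X.mul_mem (X.inv_mem (hMX.le hm)) (hmax X hMX)
  exact (zpow_mem_iff_of_not_dvd hp (hMX.le (hpow g)) hk).mp hgk

theorem frattini_le_of_commutator_le_of_pow_mem [Finite G] {p : ℕ} (hp : p.Prime)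
    {N : Subgroup G} (hN : commutator G ≤ N) (hpow : ∀ g : G, g ^ p ∈ N) : frattini G ≤ N := by
  intro v hvΦ
  by_contra hvN
  obtain ⟨M, ⟨hNM, hvM⟩, hM⟩ := Set.Finite.exists_maximalFor id {M : Subgroup G | N ≤ M ∧ v ∉ M}
    (Set.toFinite _) ⟨N, le_rfl, hvN⟩
  have := Normal.of_commutator_le (G := G) (hN.trans hNM)
  have hcoatom : IsCoatom M := isCoatom_of_forall_lt_mem hp (fun g => hNM (hpow g)) hvM
    fun X hMX => by_contra fun hvX =>
      hMX.ne (le_antisymm hMX.le (hM ⟨hNM.trans hMX.le, hvX⟩ hMX.le))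
  exact hvM (frattini_le_coatom hcoatom hvΦ)

theorem commutator_le_of_isCoatom {M : Subgroup G} [M.Normal] (hM : IsCoatom M) :
    commutator G ≤ M := by
  obtain ⟨x, hx⟩ : ∃ x, x ∉ M := by
    by_contra! h
    exact hM.1 (eq_top_iff' M |>.mpr h)
  have hsup : M ⊔ zpowers x = ⊤ := hM.2 _ (left_lt_sup.mpr (by rwa [zpowers_le]))
  have hcyc : zpowers (QuotientGroup.mk' M x) = ⊤ := by
    have hMbot : M.map (QuotientGroup.mk' M) = ⊥ := by
      rw [Subgroup.map_eq_bot_iff, QuotientGroup.ker_mk']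
    rw [← MonoidHom.map_zpowers, ← bot_sup_eq (map _ (zpowers x)), ← hMbot,
      ← Subgroup.map_sup, hsup, map_top_of_surjective _ (QuotientGroup.mk'_surjective M)]
  have : IsCyclic (G ⧸ M) := isCyclic_iff_exists_zpowers_eq_top.mpr ⟨_, hcyc⟩
  let := IsCyclic.commGroup (α := G ⧸ M)
  simpa using Abelianization.commutator_subset_ker (QuotientGroup.mk' M)

theorem commutator_le_frattini [Group.IsNilpotent G] : commutator G ≤ frattini G :=
  le_iInf₂ fun M hM =>
    have := NormalizerCondition.normal_of_coatom M Group.normalizerCondition_of_isNilpotent hM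
    commutator_le_of_isCoatom hM

theorem IsPGroup.le_of_forall_pow_mem_imp_mem {p : ℕ} (hG : IsPGroup p G) {H K : Subgroup G}
    (hHK : ∀ t ∈ H, t ^ p ∈ K → t ∈ K) : H ≤ K := by
  intro t ht
  obtain ⟨n, hn⟩ := hG t
  induction n generalizing t with
  | zero =>
    rw [pow_zero, pow_one] at hn
    exact hn ▸ K.one_mem
  | succ n ih =>
    refine hHK t ht (ih (H.pow_mem ht p) ?_)
    rwa [← pow_mul, ← pow_succ']

theorem mem_centralizer_frattini_of_pow_mem_center [Finite G] {p : ℕ} (hp : p.Prime)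
    (hG : commutator G ≤ center G) {t : G} (htp : t ^ p ∈ center G) :
    t ∈ centralizer (frattini G) := by
  have hΦ : frattini G ≤ centralizer {t} := by
    refine frattini_le_of_commutator_le_of_pow_mem hp (hG.trans (center_le_centralizer _))
      fun g => mem_centralizer_singleton_iff.mpr ?_
    rw [← commutatorElement_eq_one_iff_mul_comm,
      commutatorElement_pow_left_of_commutator_le_center hG,
      ← commutatorElement_pow_right_of_commutator_le_center hG]
    exact commutatorElement_eq_one_iff_mul_comm.mpr (mem_center_iff.mp htp g)
  exact fun h hh => mem_centralizer_singleton_iff.mp (hΦ hh)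

theorem commutator_le_center_of_forall_characteristic_abelian [Group.IsNilpotent G]
    (hZ : ∀ U : Subgroup G, U.Characteristic → (∀ x ∈ U, ∀ y ∈ U, x * y = y * x) →
      U ≤ center G) :
    commutator G ≤ center G := by
  refine commutator_le_center_of_inf_upperCentralSeries_two_le (hZ _ inferInstance ?_)
  intro x hx y hy
  have := commutator_eq_bot_iff_le_centralizer.mp
    (commutator_commutator_upperCentralSeries_two_eq_bot (G := G))
  exact this (mem_inf.mp hy).1 x (mem_inf.mp hx).2

theorem frattini_le_center_of_forall_characteristic_abelian [Finite G] {p : ℕ} (hp : p.Prime)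
    (hpG : IsPGroup p G)
    (hZ : ∀ U : Subgroup G, U.Characteristic → (∀ x ∈ U, ∀ y ∈ U, x * y = y * x) →
      U ≤ center G) :
    frattini G ≤ center G := by
  have : Fact p.Prime := ⟨hp⟩
  have := hpG.isNilpotent
  have hG := commutator_le_center_of_forall_characteristic_abelian hZ (G := G)
  have hcenterΦ : frattini G ⊓ centralizer (frattini G) ≤ center G :=
    hZ _ inferInstance fun x hx y hy => ((mem_inf.mp hx).2 y (mem_inf.mp hy).1).symm
  refine hpG.le_of_forall_pow_mem_imp_mem fun t ht htp => hcenterΦ (mem_inf.mpr ⟨ht, ?_⟩)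
  exact mem_centralizer_frattini_of_pow_mem_center hp hG htp

end

section

variable {A G : Type*} [Group A] [Group G] [MulDistribMulAction A G]

theorem le_center_of_forall_smul_eq (hGA : actCommutator A G = ⊤) {M : Subgroup G} [M.Normal]
    (hM : ∀ a : A, ∀ m ∈ M, a • m = m) : M ≤ center G := by
  have hcentralizes : actCommutator A G ≤ centralizer M := by
    refine (closure_le _).mpr ?_
    rintro _ ⟨g, a, rfl⟩ m hm
    have hconj : (a • g) * m * (a • g)⁻¹ = g * m * g⁻¹ := by
      rw [← hM a m hm, ← smul_inv', ← smul_mul', ← smul_mul',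
        hM a _ (‹M.Normal›.conj_mem m hm g), hM a m hm]
    calc m * (g⁻¹ * (a • g)) = g⁻¹ * (g * m * g⁻¹) * (a • g) := by group
      _ = g⁻¹ * ((a • g) * m * (a • g)⁻¹) * (a • g) := by rw [hconj]
      _ = g⁻¹ * (a • g) * m := by group
  rw [hGA, le_centralizer_iff, coe_top, centralizer_univ] at hcentralizes
  exact hcentralizes

theorem mem_commutator_of_forall_smul_eq [Finite A] [Finite G]
    (hcop : (Nat.card A).Coprime (Nat.card G)) (hGA : actCommutator A G = ⊤)
    {c : G} (hc : ∀ a : A, a • c = c) : c ∈ commutator G := by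
  have := Fintype.ofFinite A
  let transfer : G →* Abelianization G :=
    ∏ a : A, Abelianization.of.comp (MulDistribMulAction.toMonoidHom G a)
  have transfer_apply (g : G) : transfer g = ∏ a : A, Abelianization.of (a • g) := by
    simp [transfer]
  have transfer_smul (b : A) (g : G) : transfer (b • g) = transfer g := by
    simp only [transfer_apply, smul_smul]
    exact Fintype.prod_equiv (Equiv.mulRight b) _ _ fun _ => rfl
  have htop : actCommutator A G ≤ transfer.ker := by
    refine (closure_le _).mpr ?_
    rintro _ ⟨g, a, rfl⟩
    rw [SetLike.mem_coe, MonoidHom.mem_ker, map_mul, map_inv, transfer_smul, inv_mul_cancel]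
  have hA : Abelianization.of c ^ Nat.card A = 1 := by
    have h1 : transfer c = 1 := htop (hGA ▸ mem_top c)
    rwa [transfer_apply, Finset.prod_congr rfl fun a _ => by rw [hc a], Finset.prod_const,
      Finset.card_univ, ← Nat.card_eq_fintype_card] at h1
  have hG : Abelianization.of c ^ Nat.card G = 1 := by
    rw [← map_pow, pow_card_eq_one', map_one]
  have hc1 := pow_gcd_eq_one.mpr ⟨hA, hG⟩
  rwa [Nat.Coprime.gcd_eq_one hcop, pow_one, ← MonoidHom.mem_ker, Abelianization.ker_of] at hc1

end

theorem derived_eq_frattini_eq_center_eq_fixedPoints_general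
    {A G : Type*} [Group A] [Group G] [Finite A] [Finite G] [MulDistribMulAction A G]
    (p : ℕ) (hp : p.Prime) (hpG : IsPGroup p G)
    (hcop : (Nat.card A).Coprime (Nat.card G))
    (hcent : ∀ U : Subgroup G, U.Characteristic → (∀ x ∈ U, ∀ y ∈ U, x * y = y * x) →
      ∀ (a : A), ∀ u ∈ U, a • u = u)
    (hGA : actCommutator A G = ⊤) :
    commutator G = frattini G ∧ frattini G = Subgroup.center G ∧
      Subgroup.center G = ⨅ a : A, fixedSub G a := by
  have : Fact p.Prime := ⟨hp⟩
  have := hpG.isNilpotent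
  have hZ (U : Subgroup G) (hU : U.Characteristic) (hab : ∀ x ∈ U, ∀ y ∈ U, x * y = y * x) :
      U ≤ center G :=
    le_center_of_forall_smul_eq hGA (hcent U hU hab)
  have center_le_fixed : center G ≤ ⨅ a : A, fixedSub G a :=
    le_iInf fun a z hz =>
      hcent _ inferInstance (fun x hx y _ => (mem_center_iff.mp hx y).symm) a z hz
  have fixed_le_commutator : ⨅ a : A, fixedSub G a ≤ commutator G :=
    fun c hc => mem_commutator_of_forall_smul_eq hcop hGA (mem_iInf.mp hc)
  have frattini_le_center := frattini_le_center_of_forall_characteristic_abelian hp hpG hZ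
  refine ⟨commutator_le_frattini.antisymm ?_, frattini_le_center.antisymm ?_,
    center_le_fixed.antisymm ?_⟩
  · exact frattini_le_center.trans (center_le_fixed.trans fixed_le_commutator)
  · exact center_le_fixed.trans (fixed_le_commutator.trans commutator_le_frattini)
  · exact fixed_le_commutator.trans (commutator_le_frattini.trans frattini_le_center)

/-- Suppose a finite group `A` acts coprimely on a finite `p`-group `G`, `A`
centralizes every characteristic abelian subgroup of `G`, and `G = [G, A]`.
Then `G' = Φ(G) = Z(G) = C_G(A)`. -/
theorem derived_eq_frattini_eq_center_eq_fixedPoints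
    {A G : Type*} [Group A] [Group G] [Finite A] [Finite G] [MulDistribMulAction A G]
    (p : ℕ) (hp : p.Prime) (hpG : IsPGroup p G)
    (hcop : (Nat.card A).Coprime (Nat.card G))
    (hsol : IsSolvable A ∨ IsSolvable G)
    (hcent : ∀ U : Subgroup G, U.Characteristic → (∀ x ∈ U, ∀ y ∈ U, x * y = y * x) →
      ∀ (a : A), ∀ u ∈ U, a • u = u)
    (hGA : actCommutator A G = ⊤) :
    commutator G = frattini G ∧ frattini G = Subgroup.center G ∧
      Subgroup.center G = ⨅ a : A, fixedSub G a :=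
  derived_eq_frattini_eq_center_eq_fixedPoints_general p hp hpG hcop hcent hGA
end

section
/- Let A be a noncyclic finite abelian group acting on a (possibly infinite) group G and let θ be an A-signalizer functor on G. Let B ≤ A be noncyclic and define the B-signalizer functor θ₀ on G by θ₀(b) = θ(b) for all b ∈ B∖{1}. If θ₀ is complete, then θ is complete and the completion of θ equals the completion of θ₀. -/
open Pointwise

/-- `θ` is a signalizer functor with respect to the subgroup `B` of `A`:
for each `b ∈ B∖{1}`, `θ b` is a finite `B`-invariant subgroup of `C_G(b)` of
order coprime to `|B|`, and `θ b ⊓ C_G(b') ≤ θ b'` for all `b, b' ∈ B∖{1}`. -/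
def IsSignalizerFunctorOn {A G : Type*} [Group A] [Group G] [MulDistribMulAction A G]
    (B : Subgroup A) (θ : A → Subgroup G) : Prop :=
  ∀ a ∈ B, a ≠ 1 →
    Finite (θ a) ∧ (∀ b ∈ B, b • θ a = θ a) ∧ θ a ≤ fixedSub G a ∧
      (Nat.card (θ a)).Coprime (Nat.card B) ∧
      ∀ b ∈ B, b ≠ 1 → θ a ⊓ fixedSub G b ≤ θ b

/-- `K` is a completion of the signalizer functor `θ` restricted to `B`:
`K` is a finite `B`-invariant subgroup of order coprime to `|B|` with
`C_K(b) = θ b` for all `b ∈ B∖{1}`. -/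
def IsCompletionOn {A G : Type*} [Group A] [Group G] [MulDistribMulAction A G]
    (B : Subgroup A) (θ : A → Subgroup G) (K : Subgroup G) : Prop :=
  Finite K ∧ (∀ b ∈ B, b • K = K) ∧ (Nat.card K).Coprime (Nat.card B) ∧
    ∀ b ∈ B, b ≠ 1 → K ⊓ fixedSub G b = θ b

/-- A `θ`-subgroup: a finite `A`-invariant subgroup `H` of order coprime to `|A|`
with `C_H(a) ≤ θ a` for all `a ∈ A∖{1}`. -/
def IsThetaSubgroup {A G : Type*} [Group A] [Group G] [MulDistribMulAction A G]
    (θ : A → Subgroup G) (H : Subgroup G) : Prop :=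
  Finite H ∧ (∀ a : A, a • H = H) ∧ (Nat.card H).Coprime (Nat.card A) ∧
    ∀ a : A, a ≠ 1 → H ⊓ fixedSub G a ≤ θ a

/-- `θ(B) = ⋂_{b ∈ B∖{1}} θ b`. -/
def thetaB {A G : Type*} [Group A] [Group G] [MulDistribMulAction A G]
    (θ : A → Subgroup G) (B : Subgroup A) : Subgroup G :=
  ⨅ (b : A) (_ : b ∈ B ∧ b ≠ 1), θ b

/-- `‖θ‖ = |θ(A)| · ∏_{B ∈ hyp(A)} [θ(B) : θ(A)]`, where `hyp(A)` is the set of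
subgroups of `A` of index `r`. -/
noncomputable def signNorm {A G : Type*} [Group A] [Group G] [MulDistribMulAction A G]
    (r : ℕ) (θ : A → Subgroup G) : ℕ :=
  Nat.card (thetaB θ ⊤) *
    ∏ᶠ (B : Subgroup A) (_ : B.index = r), (thetaB θ ⊤).relIndex (thetaB θ B)

open Subgroup

class Subgroup.IsInvariant (E : Type*) {K : Type*} [Group E] [Group K]
    [MulDistribMulAction E K] (L : Subgroup K) : Prop where
  smul_mem : ∀ (e : E), ∀ x ∈ L, e • x ∈ L

namespace Subgroup.IsInvariant

variable {E K : Type*} [Group E] [Group K] [MulDistribMulAction E K]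

theorem of_smul_eq {L : Subgroup K} (h : ∀ e : E, e • L = L) : L.IsInvariant E :=
  ⟨fun e x hx => h e ▸ smul_mem_pointwise_smul x e L hx⟩

theorem of_smul_eq_of_le {A : Type*} [Group A] [MulDistribMulAction A K] {B E : Subgroup A}
    {L : Subgroup K} (h : ∀ b ∈ B, b • L = L) (hE : E ≤ B) : L.IsInvariant E :=
  ⟨fun e x hx => h e (hE e.2) ▸ smul_mem_pointwise_smul x (e : A) L hx⟩

theorem smul_eq (L : Subgroup K) [L.IsInvariant E] (e : E) : e • L = L :=
  le_antisymm (pointwise_smul_subset_iff.mpr fun x hx => mem_inv_pointwise_smul_iff.mpr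
    (smul_mem e x hx)) fun x hx => mem_pointwise_smul_iff_inv_smul_mem.mpr (smul_mem e⁻¹ x hx)

instance inf (L M : Subgroup K) [L.IsInvariant E] [M.IsInvariant E] : (L ⊓ M).IsInvariant E :=
  ⟨fun e x hx => ⟨smul_mem e x hx.1, smul_mem e x hx.2⟩⟩

instance of_characteristic (L : Subgroup K) [L.Characteristic] : L.IsInvariant E :=
  ⟨fun e x hx => by
    have := (characteristic_iff_map_eq.mp ‹_›) (MulDistribMulAction.toMulEquiv K e)
    exact this ▸ mem_map_of_mem _ hx⟩

instance fixedSub {A : Type*} [CommGroup A] [MulDistribMulAction A K] (E : Subgroup A) (c : A) :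
    (fixedSub K c).IsInvariant E :=
  ⟨fun e x (hx : c • x = x) => show c • (e : A) • x = (e : A) • x by
    rw [smul_comm, hx]⟩

instance (L : Subgroup K) [L.IsInvariant E] : MulDistribMulAction E L where
  smul e x := ⟨e • (x : K), smul_mem e (x : K) x.2⟩
  one_smul x := Subtype.ext (one_smul E (x : K))
  mul_smul e f x := Subtype.ext (mul_smul e f (x : K))
  smul_mul e x y := Subtype.ext (smul_mul' e (x : K) y)
  smul_one e := Subtype.ext (smul_one e)

instance (N : Subgroup K) [N.Normal] [N.IsInvariant E] : MulDistribMulAction E (K ⧸ N) where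
  smul e := QuotientGroup.map N N (MulDistribMulAction.toMonoidHom K e) (smul_mem e)
  one_smul := by
    rintro ⟨x⟩
    exact congrArg QuotientGroup.mk (one_smul E x)
  mul_smul e f := by
    rintro ⟨x⟩
    exact congrArg QuotientGroup.mk (mul_smul e f x)
  smul_mul e := map_mul _
  smul_one e := map_one _

theorem smul_mk (N : Subgroup K) [N.Normal] [N.IsInvariant E] (e : E) (x : K) :
    e • (x : K ⧸ N) = ((e • x : K) : K ⧸ N) := rfl

end Subgroup.IsInvariant

section FixedSub

variable {E K : Type*} [Group E] [Group K] [MulDistribMulAction E K]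

theorem map_subtype_fixedSub (L : Subgroup K) [L.IsInvariant E] (e : E) :
    (fixedSub L e).map L.subtype = L ⊓ fixedSub K e := by
  ext x
  constructor
  · rintro ⟨y, hy, rfl⟩
    exact ⟨y.2, congrArg Subtype.val (hy : e • y = y)⟩
  · rintro ⟨hxL, hx⟩
    exact ⟨⟨x, hxL⟩, Subtype.ext (hx : e • x = x), rfl⟩

theorem card_fixedSub_subgroup (L : Subgroup K) [L.IsInvariant E] (e : E) :
    Nat.card (fixedSub L e) = Nat.card ↥(L ⊓ fixedSub K e) := by
  rw [← map_subtype_fixedSub, card_map_of_injective L.subtype_injective]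

theorem le_iSup_inf_fixedSub_of_iSup_eq_top (L : Subgroup K) [L.IsInvariant E]
    (h : ⨆ (e : E) (_ : e ≠ 1), fixedSub L e = ⊤) :
    L ≤ ⨆ (e : E) (_ : e ≠ 1), L ⊓ fixedSub K e := by
  intro x hx
  have : x ∈ (⨆ (e : E) (_ : e ≠ 1), fixedSub L e).map L.subtype :=
    ⟨⟨x, hx⟩, h ▸ mem_top _, rfl⟩
  simpa only [Subgroup.map_iSup, map_subtype_fixedSub] using this

end FixedSub

section ElementaryAbelianAction

variable {E : Type*} [Group E] {q : ℕ}

theorem fixedSub_le_iSup_fixedSub {K : Type*} [Group K] [MulDistribMulAction E K] {e : E}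
    (he : e ≠ 1) : fixedSub K e ≤ ⨆ (e : E) (_ : e ≠ 1), fixedSub K e :=
  le_iSup₂ (f := fun (e : E) (_ : e ≠ 1) => fixedSub K e) e he

theorem zpowers_eq_zpowers_iff_of_exponent_prime (hq : q.Prime) [Finite E]
    (hexp : ∀ e : E, e ^ q = 1) {e f : E} (he : e ≠ 1) (hf : f ≠ 1) :
    zpowers e = zpowers f ↔ e ∈ zpowers f := by
  have := Fact.mk hq
  refine ⟨fun h => h ▸ mem_zpowers e, fun h => eq_of_le_of_card_ge (zpowers_le.mpr h) ?_⟩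
  rw [Nat.card_zpowers, Nat.card_zpowers, orderOf_eq_prime (hexp e) he,
    orderOf_eq_prime (hexp f) hf]

open scoped Classical

theorem filter_zpowers_eq_erase [Fintype E] (hq : q.Prime) (hexp : ∀ e : E, e ^ q = 1) {f : E}
    (hf : f ≠ 1) : (Finset.univ.erase 1).filter (zpowers · = zpowers f) =
      (Finset.univ.filter (· ∈ zpowers f)).erase 1 := by
  ext e
  simp only [Finset.mem_filter, Finset.mem_erase, Finset.mem_univ, and_true, true_and]
  exact and_congr_right fun he => zpowers_eq_zpowers_iff_of_exponent_prime hq hexp he hf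

theorem card_image_zpowers [Fintype E] (hq : q.Prime) (hcard : Nat.card E = q ^ 2)
    (hexp : ∀ e : E, e ^ q = 1) : ((Finset.univ.erase (1 : E)).image zpowers).card = q + 1 := by
  have := Fact.mk hq
  have hcount := Finset.card_eq_sum_card_fiberwise (f := zpowers) (s := Finset.univ.erase (1 : E))
    (t := (Finset.univ.erase (1 : E)).image zpowers) fun e he => Finset.mem_image_of_mem _ he
  rw [Finset.sum_congr rfl fun M hM => ?_, Finset.sum_const, smul_eq_mul,
    Finset.card_erase_of_mem (Finset.mem_univ 1), Finset.card_univ, ← Nat.card_eq_fintype_card,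
    hcard, ← one_pow 2, Nat.sq_sub_sq] at hcount
  · exact (Nat.eq_of_mul_eq_mul_right (Nat.sub_pos_of_lt hq.one_lt) hcount).symm
  obtain ⟨f, hf, rfl⟩ := Finset.mem_image.mp hM
  rw [filter_zpowers_eq_erase hq hexp (Finset.ne_of_mem_erase hf),
    Finset.card_erase_of_mem (by simp [one_mem]), ← Fintype.card_subtype,
    ← Nat.card_eq_fintype_card, Nat.card_zpowers,
    orderOf_eq_prime (hexp f) (Finset.ne_of_mem_erase hf)]

/-- The `q + 1` subgroups of order `q` cover `E` once away from `1`. -/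
theorem prod_image_zpowers_prod_smul [Fintype E] (hq : q.Prime) (hcard : Nat.card E = q ^ 2)
    (hexp : ∀ e : E, e ^ q = 1) {V : Type*} [CommGroup V] [MulDistribMulAction E V] (v : V) :
    ∏ M ∈ (Finset.univ.erase (1 : E)).image zpowers,
        ∏ e ∈ Finset.univ.filter (· ∈ M), e • v = v ^ q * ∏ e : E, e • v := by
  have hsplit : ∀ M : Subgroup E,
      ∏ e ∈ Finset.univ.filter (· ∈ M), e • v =
        v * ∏ e ∈ (Finset.univ.filter (· ∈ M)).erase 1, e • v :=
    fun M => by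
      have h1 : (1 : E) ∈ Finset.univ.filter (· ∈ M) := by simp [M.one_mem]
      simpa only [one_smul] using (Finset.mul_prod_erase _ (· • v) h1).symm
  calc _ = ∏ M ∈ (Finset.univ.erase (1 : E)).image zpowers,
        (v * ∏ e ∈ (Finset.univ.erase (1 : E)).filter (zpowers · = M), e • v) :=
        Finset.prod_congr rfl fun M hM => by
          obtain ⟨f, hf, rfl⟩ := Finset.mem_image.mp hM
          rw [hsplit, filter_zpowers_eq_erase hq hexp (Finset.ne_of_mem_erase hf)]
    _ = v ^ (q + 1) * ∏ e ∈ Finset.univ.erase (1 : E), e • v := by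
        rw [Finset.prod_mul_distrib, Finset.prod_const, card_image_zpowers hq hcard hexp]
        exact congrArg _
          (Finset.prod_fiberwise_of_maps_to (fun e he => Finset.mem_image_of_mem _ he) _)
    _ = v ^ q * ∏ e : E, e • v := by
        rw [pow_succ, mul_assoc]
        simp

theorem prod_smul_mem_fixedSub [Fintype E] {V : Type*} [CommGroup V] [MulDistribMulAction E V]
    (M : Subgroup E) (v : V) {m : E} (hm : m ∈ M) :
    ∏ e ∈ Finset.univ.filter (· ∈ M), e • v ∈ fixedSub V m := by
  change m • ∏ e ∈ _, e • v = _
  rw [Finset.smul_prod']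
  refine Finset.prod_equiv (Equiv.mulLeft m) (fun e => ?_) fun e _ => (mul_smul m e v).symm
  simp [M.mul_mem_cancel_left hm]

/-- Each factor of `prod_image_zpowers_prod_smul` is fixed by some `e ≠ 1`, and `v ↦ v ^ q` is
invertible on `V`. -/
theorem iSup_fixedSub_eq_top_of_comm [Finite E] (hq : q.Prime) (hcard : Nat.card E = q ^ 2)
    (hexp : ∀ e : E, e ^ q = 1) {V : Type*} [CommGroup V] [MulDistribMulAction E V]
    (hV : ¬ q ∣ Nat.card V) : ⨆ (e : E) (_ : e ≠ 1), fixedSub V e = ⊤ := by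
  have := Fintype.ofFinite E
  set H := ⨆ (e : E) (_ : e ≠ 1), fixedSub V e
  refine eq_top_iff.mpr fun v _ => ?_
  have hfactor : ∀ M ∈ (Finset.univ.erase (1 : E)).image zpowers,
      ∏ e ∈ Finset.univ.filter (· ∈ M), e • v ∈ H := fun M hM => by
    obtain ⟨f, hf, rfl⟩ := Finset.mem_image.mp hM
    exact fixedSub_le_iSup_fixedSub (Finset.ne_of_mem_erase hf)
      (prod_smul_mem_fixedSub _ v (mem_zpowers f))
  have hnorm : ∏ e : E, e • v ∈ H := by
    have : Nontrivial E := Finite.one_lt_card_iff_nontrivial.mp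
      (hcard ▸ Nat.one_lt_pow two_ne_zero hq.one_lt)
    obtain ⟨f, hf⟩ := exists_ne (1 : E)
    simpa using fixedSub_le_iSup_fixedSub hf (prod_smul_mem_fixedSub ⊤ v (mem_top f))
  have hvq : v ^ q ∈ H := by
    have := H.mul_mem (H.prod_mem hfactor) (H.inv_mem hnorm)
    rwa [prod_image_zpowers_prod_smul hq hcard hexp, mul_inv_cancel_right] at this
  obtain ⟨m, hm⟩ := exists_pow_eq_self_of_coprime (x := v)
    ((Nat.Prime.coprime_iff_not_dvd hq).mpr fun h => hV (h.trans (orderOf_dvd_natCard v)))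
  exact hm ▸ H.pow_mem hvq m

end ElementaryAbelianAction

section CoprimeAction

variable {E K : Type*} [Group E] [Group K] [MulDistribMulAction E K]

theorem Subgroup.card_lt_card_of_ne_top [Finite K] {H : Subgroup K} (h : H ≠ ⊤) :
    Nat.card H < Nat.card K :=
  (card_le_card_group H).lt_of_ne fun hH => h (eq_top_of_card_eq H hH)

/-- A fixed point `kN` of `e` is a coset with `|N|` elements, a number prime to `q`, permuted by
the `q`-group `⟨e⟩`; so `⟨e⟩` fixes one of its elements. -/
theorem fixedSub_quotient_le_map {q : ℕ} [Fact q.Prime] (hE : IsPGroup q E) (N : Subgroup K)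
    [N.Normal] [N.IsInvariant E] (hN : ¬ q ∣ Nat.card N) (e : E) :
    fixedSub (K ⧸ N) e ≤ (fixedSub K e).map (QuotientGroup.mk' N) := by
  intro x (hk : e • x = x)
  obtain ⟨k, rfl⟩ := QuotientGroup.mk_surjective x
  have hstab : zpowers e ≤ MulAction.stabilizer E (k : K ⧸ N) := zpowers_le.mpr hk
  let coset : SubMulAction (zpowers e) K :=
    { carrier := QuotientGroup.mk ⁻¹' {(k : K ⧸ N)}
      smul_mem' := fun z y (hy : (y : K ⧸ N) = k) => show (((z : E) • y : K) : K ⧸ N) = k by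
        rw [← Subgroup.IsInvariant.smul_mk, hy]
        exact hstab z.2 }
  have hcard : Nat.card coset = Nat.card N := by
    rw [← mul_one (Nat.card N), ← Nat.card_unique (α := ({(k : K ⧸ N)} : Set (K ⧸ N))),
      ← QuotientGroup.card_preimage_mk]
    rfl
  obtain ⟨⟨y, hy⟩, hfix⟩ :=
    (hE.to_subgroup (zpowers e)).nonempty_fixed_point_of_prime_not_dvd_card coset (hcard ▸ hN)
  exact ⟨y, congrArg Subtype.val (hfix ⟨e, mem_zpowers e⟩), hy⟩

theorem iSup_fixedSub_eq_top_of_quotient {q : ℕ} [Fact q.Prime] (hE : IsPGroup q E)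
    (N : Subgroup K) [N.Normal] [N.IsInvariant E] (hN : ¬ q ∣ Nat.card N)
    (hNle : N ≤ ⨆ (e : E) (_ : e ≠ 1), fixedSub K e)
    (hquot : ⨆ (e : E) (_ : e ≠ 1), fixedSub (K ⧸ N) e = ⊤) :
    ⨆ (e : E) (_ : e ≠ 1), fixedSub K e = ⊤ := by
  set H := ⨆ (e : E) (_ : e ≠ 1), fixedSub K e
  have hmap : H.map (QuotientGroup.mk' N) = ⊤ := by
    refine eq_top_iff.mpr (hquot ▸ iSup₂_le fun e he => ?_)
    exact (fixedSub_quotient_le_map hE N hN e).trans (map_mono (fixedSub_le_iSup_fixedSub he))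
  rw [← sup_of_le_left hNle, ← QuotientGroup.ker_mk' N, ← comap_map_eq, hmap, comap_top]

theorem exists_sylow_isInvariant {q : ℕ} [Fact q.Prime] (hE : IsPGroup q E)
    [Finite K] (hK : ¬ q ∣ Nat.card K) (p : ℕ) [Fact p.Prime] :
    ∃ P : Sylow p K, (P : Subgroup K).IsInvariant E := by
  have : Finite (Sylow p K) :=
    Finite.of_injective (fun P : Sylow p K => (P : Subgroup K)) fun _ _ => Sylow.ext
  obtain ⟨P⟩ := (inferInstance : Nonempty (Sylow p K))
  have hSylow : ¬ q ∣ Nat.card (Sylow p K) :=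
    fun h => hK (h.trans ((Sylow.card_dvd_index P).trans (index_dvd_card _)))
  obtain ⟨Q, hQ⟩ := hE.nonempty_fixed_point_of_prime_not_dvd_card (Sylow p K) hSylow
  exact ⟨Q, .of_smul_eq fun e => congrArg Sylow.toSubgroup (hQ e)⟩

theorem eq_top_of_forall_sylow_le [Finite K] (H : Subgroup K)
    (h : ∀ p, p.Prime → ∃ P : Sylow p K, (P : Subgroup K) ≤ H) : H = ⊤ := by
  refine index_eq_one.mp (Nat.eq_one_iff_not_exists_prime_dvd.mpr fun p hp hpH => ?_)
  have := Fact.mk hp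
  obtain ⟨P, hP⟩ := h p hp
  exact P.not_dvd_index (hpH.trans (index_dvd_of_le hP))

end CoprimeAction

section Generation

variable {E : Type*} [Group E] [Finite E] {q : ℕ}

theorem iSup_fixedSub_eq_top (hq : q.Prime) (hcard : Nat.card E = q ^ 2)
    (hexp : ∀ e : E, e ^ q = 1) {K : Type*} [Group K] [Finite K] [MulDistribMulAction E K]
    (hK : ¬ q ∣ Nat.card K) : ⨆ (e : E) (_ : e ≠ 1), fixedSub K e = ⊤ := by
  have := Fact.mk hq
  have hE : IsPGroup q E := .of_card hcard
  induction hn : Nat.card K using Nat.strong_induction_on generalizing K with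
  | _ n ih =>
  subst hn
  have hsub : ∀ L : Subgroup K, [L.IsInvariant E] → Nat.card L < Nat.card K →
      L ≤ ⨆ (e : E) (_ : e ≠ 1), fixedSub K e := fun L _ hL =>
    (le_iSup_inf_fixedSub_of_iSup_eq_top L
      (ih _ hL (fun h => hK (h.trans (card_subgroup_dvd_card L))) rfl)).trans
      (iSup₂_mono fun _ _ => inf_le_right)
  by_cases hpK : ∃ p, p.Prime ∧ IsPGroup p K
  · obtain ⟨p, hp, hpK⟩ := hpK
    have := Fact.mk hp
    by_cases hZ : center K = ⊤
    · let := Group.commGroupOfCenterEqTop hZ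
      exact iSup_fixedSub_eq_top_of_comm hq hcard hexp hK
    have : Nontrivial K := Subgroup.nontrivial_iff.mp (nontrivial_of_ne _ _ hZ)
    have hZ1 : 1 < Nat.card (center K) :=
      Finite.one_lt_card_iff_nontrivial.mpr hpK.center_nontrivial
    refine iSup_fixedSub_eq_top_of_quotient hE (center K)
      (fun h => hK (h.trans (card_subgroup_dvd_card _))) (hsub _ (card_lt_card_of_ne_top hZ))
      (ih _ ?_ (fun h => hK (h.trans (card_quotient_dvd_card _))) rfl)
    rw [card_eq_card_quotient_mul_card_subgroup (center K)]
    exact lt_mul_of_one_lt_right Nat.card_pos hZ1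
  · refine eq_top_of_forall_sylow_le _ fun p hp => ?_
    have := Fact.mk hp
    obtain ⟨P, hP⟩ := exists_sylow_isInvariant hE hK p
    refine ⟨P, hsub P (card_lt_card_of_ne_top fun hP' => hpK ⟨p, hp, ?_⟩)⟩
    exact (hP' ▸ P.isPGroup').of_equiv Subgroup.topEquiv

end Generation

section Subgroups

variable {E : Type*} [Group E] [Finite E] {q : ℕ} {G : Type*} [Group G] [MulDistribMulAction E G]

theorem le_of_forall_inf_fixedSub_le (hq : q.Prime) (hcard : Nat.card E = q ^ 2)
    (hexp : ∀ e : E, e ^ q = 1) (L : Subgroup G) [L.IsInvariant E] [Finite L]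
    (hL : ¬ q ∣ Nat.card L) {X : Subgroup G}
    (h : ∀ e : E, e ≠ 1 → L ⊓ fixedSub G e ≤ X) : L ≤ X :=
  (le_iSup_inf_fixedSub_of_iSup_eq_top L (iSup_fixedSub_eq_top hq hcard hexp hL)).trans
    (iSup₂_le h)

theorem exists_prime_dvd_card_inf_fixedSub (hq : q.Prime) (hcard : Nat.card E = q ^ 2)
    (hexp : ∀ e : E, e ^ q = 1) (L : Subgroup G) [L.IsInvariant E] [Finite L]
    (hL : ¬ q ∣ Nat.card L) {p : ℕ} (hp : p.Prime) (hpL : p ∣ Nat.card L) :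
    ∃ e : E, e ≠ 1 ∧ p ∣ Nat.card ↥(L ⊓ fixedSub G e) := by
  have := Fact.mk hp
  have := Fact.mk hq
  obtain ⟨P, hP⟩ := exists_sylow_isInvariant (IsPGroup.of_card hcard) hL p
  by_contra! h
  refine P.ne_bot_of_dvd_card hpL (le_bot_iff.mp (le_of_forall_inf_fixedSub_le hq hcard hexp
    (P : Subgroup L) (fun hq' => hL (hq'.trans (card_subgroup_dvd_card _))) fun e he => ?_))
  rcases (P.isPGroup'.to_le inf_le_left).card_eq_or_dvd with h1 | h1
  · exact (card_eq_one.mp h1).le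
  · exact absurd (h1.trans ((card_dvd_of_le inf_le_right).trans
      (card_fixedSub_subgroup L e).dvd)) (h e he)

end Subgroups

section ElementaryAbelianSubgroup

variable {C : Type*} [CommGroup C]

/-- Take `g` of order `exp C` and `y ∉ ⟨g⟩` with `y ^ q ∈ ⟨g⟩`; maximality of the order of `g`
forces `y ^ q = g ^ (q * u)`, so `w = y * g ^ (-u)` has order `q`, and so has `g ^ (exp C / q)`. -/
theorem exists_orderOf_eq_prime_not_mem_zpowers [Finite C] (hC : ¬ IsCyclic C) :
    ∃ q, q.Prime ∧ ∃ x w : C, orderOf x = q ∧ orderOf w = q ∧ w ∉ zpowers x := by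
  obtain ⟨g, hg⟩ := Monoid.exists_orderOf_eq_exponent (Monoid.ExponentExists.of_finite (G := C))
  have hgtop : zpowers g ≠ ⊤ := fun h => hC (isCyclic_iff_exists_zpowers_eq_top.mpr ⟨g, h⟩)
  set q := (zpowers g).index.minFac
  have hq : q.Prime := Nat.minFac_prime (mt index_eq_one.mp hgtop)
  have := Fact.mk hq
  obtain ⟨ybar, hybar⟩ :=
    exists_prime_orderOf_dvd_card' (G := C ⧸ zpowers g) q (Nat.minFac_dvd _)
  obtain ⟨y, rfl⟩ := QuotientGroup.mk_surjective ybar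
  have hy : y ∉ zpowers g := fun h => hq.ne_one
    (hybar ▸ orderOf_eq_one_iff.mpr ((QuotientGroup.eq_one_iff y).mpr h))
  obtain ⟨t, ht⟩ : ∃ t : ℤ, g ^ t = y ^ q := mem_zpowers_iff.mp
    ((QuotientGroup.eq_one_iff _).mp (by rw [QuotientGroup.mk_pow, ← hybar, pow_orderOf_eq_one]))
  have hqg : q ∣ orderOf g :=
    hybar ▸ (orderOf_map_dvd (QuotientGroup.mk' _) y).trans (hg ▸ Monoid.order_dvd_exponent y)
  obtain ⟨u, rfl⟩ : (q : ℤ) ∣ t := by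
    have hm : ((orderOf g / q : ℕ) : ℤ) ≠ 0 :=
      Int.natCast_ne_zero.mpr (Nat.div_pos (Nat.le_of_dvd (orderOf_pos g) hqg) hq.pos).ne'
    have h1 : g ^ (t * (orderOf g / q : ℕ)) = 1 := by
      rw [zpow_mul, ht, zpow_natCast, ← pow_mul, Nat.mul_div_cancel' hqg, hg,
        Monoid.pow_exponent_eq_one]
    have h2 : ((q * (orderOf g / q) : ℕ) : ℤ) ∣ t * (orderOf g / q : ℕ) := by
      rw [Nat.mul_div_cancel' hqg]
      exact orderOf_dvd_iff_zpow_eq_one.mpr h1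
    rwa [Nat.cast_mul, mul_dvd_mul_iff_right hm] at h2
  set w := y * g ^ (-u)
  have hwq : w ^ q = 1 := by
    rw [mul_pow, ← ht, ← zpow_natCast (g ^ (-u)), ← zpow_mul, ← zpow_add]
    simp [mul_comm]
  have hw : w ∉ zpowers g := fun h => hy (by
    simpa [w] using mul_mem h (zpow_mem (mem_zpowers g) u))
  exact ⟨q, hq, g ^ (orderOf g / q), w, orderOf_pow_orderOf_div (orderOf_pos g).ne' hqg,
    orderOf_eq_prime hwq (fun h => hw (h ▸ one_mem _)),
    fun h => hw (zpowers_le.mpr (pow_mem (mem_zpowers g) _) h)⟩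

theorem card_zpowers_sup_zpowers [Finite C] {q : ℕ} (hq : q.Prime) {x w : C} (hx : orderOf x = q)
    (hw : orderOf w = q) (hxw : w ∉ zpowers x) :
    Nat.card ↥(zpowers x ⊔ zpowers w) = q ^ 2 := by
  have hinf : zpowers x ⊓ zpowers w = ⊥ := by
    have hdvd : Nat.card ↥(zpowers x ⊓ zpowers w) ∣ q :=
      hw ▸ Nat.card_zpowers w ▸ card_dvd_of_le inf_le_right
    refine (hq.eq_one_or_self_of_dvd _ hdvd).elim card_eq_one.mp fun h => absurd ?_ hxw
    have := eq_of_le_of_card_ge (inf_le_right : zpowers x ⊓ zpowers w ≤ _)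
      (by rw [h, Nat.card_zpowers, hw])
    exact (by rw [this]; exact mem_zpowers w : w ∈ zpowers x ⊓ zpowers w).1
  rw [← relIndex_bot_left, ← relIndex_mul_relIndex _ _ _ bot_le le_sup_left, relIndex_bot_left,
    relIndex_sup_left, ← inf_relIndex_right, hinf, relIndex_bot_left, Nat.card_zpowers,
    Nat.card_zpowers, hx, hw, sq]

theorem Subgroup.exists_le_card_eq_sq_of_not_isCyclic [Finite C] (B : Subgroup C)
    (hB : ¬ IsCyclic B) :
    ∃ q, q.Prime ∧ ∃ E ≤ B, Nat.card E = q ^ 2 ∧ ∀ e : E, e ^ q = 1 := by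
  obtain ⟨q, hq, x, w, hx, hw, hxw⟩ := exists_orderOf_eq_prime_not_mem_zpowers hB
  refine ⟨q, hq, (zpowers x ⊔ zpowers w).map B.subtype, map_subtype_le _, ?_, ?_⟩
  · rw [card_map_of_injective B.subtype_injective, card_zpowers_sup_zpowers hq hx hw hxw]
  · have hexp : zpowers x ⊔ zpowers w ≤ (powMonoidHom q).ker := sup_le
      (zpowers_le.mpr (by simp [← hx, pow_orderOf_eq_one]))
      (zpowers_le.mpr (by simp [← hw, pow_orderOf_eq_one]))
    rintro ⟨_, c, hc, rfl⟩
    have hcq : c ^ q = 1 := hexp hc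
    exact Subtype.ext (show ((c ^ q : B) : C) = 1 by rw [hcq]; rfl)

end ElementaryAbelianSubgroup

theorem Nat.Prime.not_dvd_of_coprime {q m n : ℕ} (hq : q.Prime) (h : m.Coprime n) (hn : q ∣ n) :
    ¬ q ∣ m :=
  fun hm => hq.ne_one ((Nat.Coprime.coprime_dvd_left hm h).eq_one_of_dvd hn)

namespace IsCompletionOn

variable {A G : Type*} [CommGroup A] [Group G] [MulDistribMulAction A G] {θ : A → Subgroup G}
  {K₀ : Subgroup G} {E : Subgroup A}

theorem mono {B : Subgroup A} (h : IsCompletionOn B θ K₀) (hEB : E ≤ B) :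
    IsCompletionOn E θ K₀ :=
  ⟨h.1, fun b hb => h.2.1 b (hEB hb), h.2.2.1.coprime_dvd_right (card_dvd_of_le hEB),
    fun b hb => h.2.2.2 b (hEB hb)⟩

theorem isInvariant (h : IsCompletionOn E θ K₀) : K₀.IsInvariant E :=
  .of_smul_eq_of_le h.2.1 le_rfl

theorem inf_fixedSub_eq_of_ne_one (h : IsCompletionOn E θ K₀) {e : E} (he : e ≠ 1) :
    K₀ ⊓ fixedSub G e = θ e :=
  h.2.2.2 e e.2 (by simpa using he)

theorem not_dvd_card {q : ℕ} (hq : q.Prime) (hEcard : Nat.card E = q ^ 2)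
    (h : IsCompletionOn E θ K₀) : ¬ q ∣ Nat.card K₀ :=
  hq.not_dvd_of_coprime h.2.2.1 (hEcard ▸ dvd_pow_self q two_ne_zero)

variable [Finite E] {q : ℕ}

theorem apply_le (hθ : IsSignalizerFunctorOn ⊤ θ) (hq : q.Prime) (hEcard : Nat.card E = q ^ 2)
    (hEexp : ∀ e : E, e ^ q = 1) (h : IsCompletionOn E θ K₀) {c : A} (hc : c ≠ 1) :
    θ c ≤ K₀ := by
  obtain ⟨hfin, hinv, -, hcop, hθle⟩ := hθ c trivial hc
  have : (θ c).IsInvariant E := .of_smul_eq_of_le hinv le_top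
  refine le_of_forall_inf_fixedSub_le hq hEcard hEexp (θ c)
    (hq.not_dvd_of_coprime hcop ((hEcard ▸ dvd_pow_self q two_ne_zero).trans
      (card_dvd_of_le le_top))) fun e he => ?_
  calc θ c ⊓ fixedSub G e ≤ θ e := hθle e trivial (by simpa using he)
    _ = K₀ ⊓ fixedSub G e := (h.inf_fixedSub_eq_of_ne_one he).symm
    _ ≤ K₀ := inf_le_left


theorem inf_fixedSub_eq (hθ : IsSignalizerFunctorOn ⊤ θ) (hq : q.Prime)
    (hEcard : Nat.card E = q ^ 2) (hEexp : ∀ e : E, e ^ q = 1) (h : IsCompletionOn E θ K₀)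
    {c : A} (hc : c ≠ 1) : K₀ ⊓ fixedSub G c = θ c := by
  have := h.isInvariant
  have := h.1
  have : Finite ↥(K₀ ⊓ fixedSub G c) :=
    Finite.of_injective _ (inclusion_injective inf_le_left)
  refine le_antisymm (le_of_forall_inf_fixedSub_le hq hEcard hEexp _
      (fun hd => h.not_dvd_card hq hEcard (hd.trans (card_dvd_of_le inf_le_left)))
      fun e he => ?_) (le_inf (h.apply_le hθ hq hEcard hEexp hc) (hθ c trivial hc).2.2.1)
  calc K₀ ⊓ fixedSub G c ⊓ fixedSub G e = θ e ⊓ fixedSub G c := by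
        rw [inf_right_comm, h.inf_fixedSub_eq_of_ne_one he]
    _ ≤ θ c := (hθ e trivial (by simpa using he)).2.2.2.2 c trivial hc

theorem smul_eq (hθ : IsSignalizerFunctorOn ⊤ θ) (hq : q.Prime) (hEcard : Nat.card E = q ^ 2)
    (hEexp : ∀ e : E, e ^ q = 1) (h : IsCompletionOn E θ K₀) (c : A) : c • K₀ = K₀ := by
  have := h.isInvariant
  have := h.1
  have : K₀.IsInvariant A := by
    refine ⟨fun c x hx => le_of_forall_inf_fixedSub_le hq hEcard hEexp K₀
      (h.not_dvd_card hq hEcard) (X := K₀.comap (MulDistribMulAction.toMonoidHom G c))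
      (fun e he y hy => ?_) hx⟩
    rw [h.inf_fixedSub_eq_of_ne_one he] at hy
    have he' : (e : A) ≠ 1 := by simpa using he
    exact h.apply_le hθ hq hEcard hEexp he'
      ((hθ e trivial he').2.1 c trivial ▸ smul_mem_pointwise_smul y c _ hy)
  exact IsInvariant.smul_eq K₀ c

theorem coprime_card_top (hθ : IsSignalizerFunctorOn ⊤ θ) (hq : q.Prime)
    (hEcard : Nat.card E = q ^ 2) (hEexp : ∀ e : E, e ^ q = 1) (h : IsCompletionOn E θ K₀) :
    (Nat.card K₀).Coprime (Nat.card (⊤ : Subgroup A)) := by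
  have := h.isInvariant
  have := h.1
  refine Nat.coprime_of_dvd fun p hp hpK₀ hpA => ?_
  obtain ⟨e, he, hpe⟩ := exists_prime_dvd_card_inf_fixedSub hq hEcard hEexp K₀
    (h.not_dvd_card hq hEcard) hp hpK₀
  rw [h.inf_fixedSub_eq_of_ne_one he] at hpe
  exact hp.not_dvd_of_coprime (hθ e trivial (by simpa using he)).2.2.2.1 hpA hpe

theorem top_of_card_eq_sq (hθ : IsSignalizerFunctorOn ⊤ θ) (hq : q.Prime)
    (hEcard : Nat.card E = q ^ 2) (hEexp : ∀ e : E, e ^ q = 1) (h : IsCompletionOn E θ K₀) :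
    IsCompletionOn ⊤ θ K₀ :=
  ⟨h.1, fun c _ => h.smul_eq hθ hq hEcard hEexp c, h.coprime_card_top hθ hq hEcard hEexp,
    fun _ _ hc => h.inf_fixedSub_eq hθ hq hEcard hEexp hc⟩

end IsCompletionOn

theorem complete_of_restriction_complete_general
    {A G : Type*} [CommGroup A] [Finite A] [Group G] [MulDistribMulAction A G]
    (θ : A → Subgroup G)
    (hθ : IsSignalizerFunctorOn ⊤ θ)
    (B : Subgroup A) (hB : ¬ IsCyclic B)
    (K₀ : Subgroup G) (hK₀ : IsCompletionOn B θ K₀) :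
    IsCompletionOn ⊤ θ K₀ := by
  obtain ⟨q, hq, E, hEB, hEcard, hEexp⟩ := B.exists_le_card_eq_sq_of_not_isCyclic hB
  exact (hK₀.mono hEB).top_of_card_eq_sq hθ hq hEcard hEexp

/-- Let `A` be a noncyclic finite abelian group acting on a (possibly infinite)
group `G`, `θ` an `A`-signalizer functor on `G`, and `B ≤ A` noncyclic.  If the
restriction `θ₀` of `θ` to `B` is complete, then `θ` is complete and the
completion of `θ` equals the completion of `θ₀`. -/
theorem complete_of_restriction_complete
    {A G : Type*} [CommGroup A] [Finite A] [Group G] [MulDistribMulAction A G]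
    (hA : ¬ IsCyclic A) (θ : A → Subgroup G)
    (hθ : IsSignalizerFunctorOn ⊤ θ)
    (B : Subgroup A) (hB : ¬ IsCyclic B)
    (K₀ : Subgroup G) (hK₀ : IsCompletionOn B θ K₀) :
    IsCompletionOn ⊤ θ K₀ :=
  complete_of_restriction_complete_general θ hθ B hB K₀ hK₀
end

section
/- Let r be a prime, let A be a noncyclic elementary abelian r-group acting on a (possibly infinite) group G, let θ be an A-signalizer functor on G, and let ψ be a subfunctor of θ, i.e., an A-signalizer functor on G with ψ(a) ≤ θ(a) for all a ∈ A∖{1}. Then ‖ψ‖ ≤ ‖θ‖, with equality if and only if ψ(a) = θ(a) for all a ∈ A∖{1}. -/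
/-- An elementary abelian `r`-group: an abelian group in which every element has
order dividing `r`. -/
def IsElementaryAbelian (r : ℕ) (A : Type*) [Group A] : Prop :=
  (∀ x y : A, x * y = y * x) ∧ ∀ a : A, a ^ r = 1

open Pointwise

theorem nontrivial_of_not_isCyclic {A : Type*} [Group A] (hnc : ¬ IsCyclic A) : Nontrivial A :=
  not_subsingleton_iff_nontrivial.1 fun _ => hnc isCyclic_of_subsingleton

namespace Subgroup

variable {G : Type*} [Group G]

theorem card_eq_of_index_eq {H : Subgroup G} {n m : ℕ} (hG : Nat.card G = n * m)
    (hH : H.index = m) (hm : 0 < m) : Nat.card H = n :=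
  Nat.eq_of_mul_eq_mul_right hm (by rw [← hG, ← hH, H.card_mul_index])

theorem index_eq_of_card_eq {H : Subgroup G} {n m : ℕ} (hG : Nat.card G = n * m)
    (hH : Nat.card H = n) (hn : 0 < n) : H.index = m :=
  Nat.eq_of_mul_eq_mul_left hn (by rw [← hG, ← hH, H.card_mul_index])

theorem card_mul_relIndex {H K : Subgroup G} (h : H ≤ K) :
    Nat.card H * H.relIndex K = Nat.card K := by
  rw [← relIndex_bot_left, ← relIndex_bot_left, relIndex_mul_relIndex _ _ _ bot_le h]

theorem relIndex_pos_of_le {H K : Subgroup G} [Finite K] (h : H ≤ K) : 0 < H.relIndex K :=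
  Nat.pos_of_mul_pos_left ((card_mul_relIndex h).symm ▸ Nat.card_pos)

theorem exists_ne_one_mem_of_index_eq_prime {r : ℕ} (hr : r.Prime) (hnc : ¬ IsCyclic G)
    {B : Subgroup G} (hB : B.index = r) : ∃ b ∈ B, b ≠ 1 :=
  B.bot_or_exists_ne_one.resolve_left fun h => hnc <| by
    have := Fact.mk hr
    exact isCyclic_of_prime_card (by rw [← index_bot, ← h, hB])

theorem mem_of_pow_mem_of_coprime [Finite G] {K : Subgroup G} {n : ℕ}
    (hn : (Nat.card G).Coprime n) {x : G} (hx : x ^ n ∈ K) : x ∈ K := by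
  obtain ⟨m, hm⟩ := exists_pow_eq_self_of_coprime
    (hn.symm.coprime_dvd_right (_root_.orderOf_dvd_natCard x))
  exact hm ▸ K.pow_mem hx m

theorem eq_top_of_forall_sylow_le [Finite G] {K : Subgroup G}
    (h : ∀ q, q.Prime → ∃ P : Sylow q G, (P : Subgroup G) ≤ K) : K = ⊤ := by
  by_contra hK
  obtain ⟨q, hq, hdvd⟩ := Nat.exists_prime_and_dvd (mt index_eq_one.1 hK)
  have := Fact.mk hq
  obtain ⟨P, hP⟩ := h q hq
  exact P.not_dvd_index (hdvd.trans (index_dvd_of_le hP))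

end Subgroup

noncomputable def hyperplanes (r : ℕ) (A : Type*) [Group A] [Finite A] : Finset (Subgroup A) :=
  (Set.toFinite {B : Subgroup A | B.index = r}).toFinset

@[simp] theorem mem_hyperplanes {r : ℕ} {A : Type*} [Group A] [Finite A] {B : Subgroup A} :
    B ∈ hyperplanes r A ↔ B.index = r :=
  Set.Finite.mem_toFinset _

namespace IsElementaryAbelian

variable {r : ℕ} {A : Type*} [Group A]

theorem isMulCommutative (hA : IsElementaryAbelian r A) : IsMulCommutative A :=
  ⟨⟨hA.1⟩⟩

theorem isPGroup (hA : IsElementaryAbelian r A) : IsPGroup r A :=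
  fun a => ⟨1, by rw [pow_one, hA.2]⟩

theorem subgroup (hA : IsElementaryAbelian r A) (H : Subgroup A) : IsElementaryAbelian r H :=
  ⟨fun x y => Subtype.ext (hA.1 x y), fun a => Subtype.ext (by simp [hA.2])⟩

theorem quotient (hA : IsElementaryAbelian r A) (N : Subgroup A) [N.Normal] :
    IsElementaryAbelian r (A ⧸ N) := by
  refine ⟨fun x y => ?_, fun x => ?_⟩
  · induction x using QuotientGroup.induction_on
    induction y using QuotientGroup.induction_on
    rw [← QuotientGroup.mk_mul, hA.1, QuotientGroup.mk_mul]
  · induction x using QuotientGroup.induction_on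
    rw [← QuotientGroup.mk_pow, hA.2, QuotientGroup.mk_one]

theorem orderOf_eq (hr : r.Prime) (hA : IsElementaryAbelian r A) {a : A} (ha : a ≠ 1) :
    orderOf a = r :=
  haveI := Fact.mk hr
  orderOf_eq_prime (hA.2 a) ha

theorem prime_dvd_card (hr : r.Prime) (hA : IsElementaryAbelian r A) [Finite A]
    [Nontrivial A] : r ∣ Nat.card A := by
  obtain ⟨a, ha⟩ := exists_ne (1 : A)
  exact hA.orderOf_eq hr ha ▸ orderOf_dvd_natCard a

section RankTwo

theorem index_zpowers (hr : r.Prime) (hA : IsElementaryAbelian r A)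
    (hcard : Nat.card A = r ^ 2) {c : A} (hc : c ≠ 1) : (Subgroup.zpowers c).index = r :=
  Subgroup.index_eq_of_card_eq (hcard.trans (sq r))
    (by rw [Nat.card_zpowers, hA.orderOf_eq hr hc]) hr.pos

theorem eq_zpowers_of_mem [Finite A] (hr : r.Prime) (hA : IsElementaryAbelian r A)
    (hcard : Nat.card A = r ^ 2) {B : Subgroup A} (hB : B.index = r) {c : A} (hcB : c ∈ B)
    (hc : c ≠ 1) : B = Subgroup.zpowers c :=
  (Subgroup.eq_of_le_of_card_ge (Subgroup.zpowers_le.2 hcB) (by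
    rw [Subgroup.card_eq_of_index_eq (hcard.trans (sq r)) hB hr.pos, Nat.card_zpowers,
      hA.orderOf_eq hr hc])).symm

variable [Fintype A]

open Classical in
theorem pairwiseDisjoint_hyperplanes (hr : r.Prime) (hA : IsElementaryAbelian r A)
    (hcard : Nat.card A = r ^ 2) :
    (hyperplanes r A : Set (Subgroup A)).PairwiseDisjoint
      fun B => (Finset.univ.filter (· ∈ B)).erase 1 := by
  intro B hB B' hB' hne
  refine Finset.disjoint_left.2 fun c hc hc' => hne ?_
  simp only [Finset.mem_erase, Finset.mem_filter, Finset.mem_univ, true_and] at hc hc'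
  rw [Finset.mem_coe, mem_hyperplanes] at hB hB'
  rw [eq_zpowers_of_mem hr hA hcard hB hc.2 hc.1, eq_zpowers_of_mem hr hA hcard hB' hc'.2 hc'.1]

open Classical in
theorem biUnion_hyperplanes (hr : r.Prime) (hA : IsElementaryAbelian r A)
    (hcard : Nat.card A = r ^ 2) :
    (hyperplanes r A).biUnion (fun B => (Finset.univ.filter (· ∈ B)).erase 1) =
      Finset.univ.erase 1 := by
  ext c
  simp only [Finset.mem_biUnion, mem_hyperplanes, Finset.mem_erase, Finset.mem_filter,
    Finset.mem_univ, true_and, and_true]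
  exact ⟨fun ⟨_, _, hc, _⟩ => hc, fun hc =>
    ⟨_, index_zpowers hr hA hcard hc, hc, Subgroup.mem_zpowers c⟩⟩

theorem card_hyperplanes (hr : r.Prime) (hA : IsElementaryAbelian r A)
    (hcard : Nat.card A = r ^ 2) : (hyperplanes r A).card = r + 1 := by
  classical
  have h := Finset.card_biUnion (pairwiseDisjoint_hyperplanes hr hA hcard)
  rw [biUnion_hyperplanes hr hA hcard, Finset.card_erase_of_mem (Finset.mem_univ 1),
    Finset.card_univ, ← Nat.card_eq_fintype_card, hcard, Finset.sum_congr rfl fun B hB => ?_,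
    Finset.sum_const, smul_eq_mul, ← one_pow 2, sq_tsub_sq] at h
  · exact (Nat.eq_of_mul_eq_mul_right (Nat.sub_pos_of_lt hr.one_lt) h).symm
  · rw [Finset.card_erase_of_mem (by simp), ← Fintype.card_subtype, ← Nat.card_eq_fintype_card,
      Subgroup.card_eq_of_index_eq (hcard.trans (sq r)) (mem_hyperplanes.1 hB) hr.pos]

open Classical in
theorem prod_prod_hyperplanes (hr : r.Prime) (hA : IsElementaryAbelian r A)
    (hcard : Nat.card A = r ^ 2) {M : Type*} [CommMonoid M] (f : A → M) :
    ∏ B ∈ hyperplanes r A, ∏ b ∈ Finset.univ.filter (· ∈ B), f b = f 1 ^ r * ∏ a, f a := by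
  have hsplit (s : Finset A) (hs : 1 ∈ s) : ∏ b ∈ s, f b = f 1 * ∏ b ∈ s.erase 1, f b :=
    (Finset.mul_prod_erase s f hs).symm
  rw [Finset.prod_congr rfl fun B _ => hsplit _ (by simp), Finset.prod_mul_distrib,
    Finset.prod_const, card_hyperplanes hr hA hcard,
    ← Finset.prod_biUnion (pairwiseDisjoint_hyperplanes hr hA hcard),
    biUnion_hyperplanes hr hA hcard, hsplit _ (Finset.mem_univ 1), pow_succ, mul_assoc]

end RankTwo

end IsElementaryAbelian

namespace MonoidHom

section Actions

variable {A X : Type*} [Group A] [Group X] (φ : A →* MulAut X)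

def fixedSubgroup (B : Subgroup A) : Subgroup X where
  carrier := {x | ∀ b ∈ B, φ b x = x}
  one_mem' _ _ := map_one _
  mul_mem' hx hy b hb := by rw [map_mul, hx b hb, hy b hb]
  inv_mem' hx b hb := by rw [map_inv, hx b hb]

theorem mem_fixedSubgroup {B : Subgroup A} {x : X} :
    x ∈ φ.fixedSubgroup B ↔ ∀ b ∈ B, φ b x = x := Iff.rfl

theorem fixedSubgroup_antitone : Antitone φ.fixedSubgroup :=
  fun _ _ hBC _ hx b hb => hx b (hBC hb)

@[simp] theorem fixedSubgroup_bot : φ.fixedSubgroup ⊥ = ⊤ :=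
  eq_top_iff.2 fun x _ b hb => by rw [Subgroup.mem_bot.1 hb, map_one, MulAut.one_apply]

theorem fixedSubgroup_comp {A' : Type*} [Group A'] (f : A' →* A) (B : Subgroup A') :
    (φ.comp f).fixedSubgroup B = φ.fixedSubgroup (B.map f) := by
  ext x
  simp [mem_fixedSubgroup]

theorem fixedSubgroup_invariant {N : Subgroup A} [N.Normal] (a : A) {x : X}
    (hx : x ∈ φ.fixedSubgroup N) : φ a x ∈ φ.fixedSubgroup N := fun n hn => by
  rw [← MulAut.mul_apply, ← map_mul,
    show n * a = a * (a⁻¹ * n * a) by group, map_mul, MulAut.mul_apply,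
    hx _ (by simpa using ‹N.Normal›.conj_mem n hn a⁻¹)]

def mulAutSubgroup (H : Subgroup X) (hH : ∀ a, ∀ x ∈ H, φ a x ∈ H) : A →* MulAut H where
  toFun a :=
    { toFun := fun x => ⟨φ a x, hH a x x.2⟩
      invFun := fun x => ⟨φ a⁻¹ x, hH a⁻¹ x x.2⟩
      left_inv := fun x => Subtype.ext (by simp)
      right_inv := fun x => Subtype.ext (by simp)
      map_mul' := fun x y => Subtype.ext (map_mul (φ a) (x : X) y) }
  map_one' := by ext; simp
  map_mul' a b := by ext; simp

theorem map_fixedSubgroup_mulAutSubgroup (H : Subgroup X) (hH : ∀ a, ∀ x ∈ H, φ a x ∈ H)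
    (B : Subgroup A) :
    ((φ.mulAutSubgroup H hH).fixedSubgroup B).map H.subtype = H ⊓ φ.fixedSubgroup B := by
  ext x
  constructor
  · rintro ⟨y, hy, rfl⟩
    exact ⟨y.2, fun b hb => congrArg Subtype.val (hy b hb)⟩
  · rintro ⟨hxH, hx⟩
    exact ⟨⟨x, hxH⟩, fun b hb => Subtype.ext (hx b hb), rfl⟩

theorem map_eq_self_of_invariant (N : Subgroup X) (hN : ∀ a, ∀ x ∈ N, φ a x ∈ N) (a : A) :
    N.map (φ a : X →* X) = N :=
  le_antisymm (Subgroup.map_le_iff_le_comap.2 (hN a)) fun x hx =>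
    ⟨φ a⁻¹ x, hN a⁻¹ x hx, by simp⟩

def mulAutQuotient (N : Subgroup X) [N.Normal] (hN : ∀ a, ∀ x ∈ N, φ a x ∈ N) :
    A →* MulAut (X ⧸ N) where
  toFun a := QuotientGroup.congr N N (φ a) (φ.map_eq_self_of_invariant N hN a)
  map_one' := by
    ext x
    induction x using QuotientGroup.induction_on
    simp
  map_mul' a b := by
    ext x
    induction x using QuotientGroup.induction_on
    simp

@[simp] theorem mulAutQuotient_mk (N : Subgroup X) [N.Normal] (hN : ∀ a, ∀ x ∈ N, φ a x ∈ N)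
    (a : A) (x : X) : φ.mulAutQuotient N hN a (x : X ⧸ N) = (φ a x : X ⧸ N) := rfl

end Actions

section Hyperplanes

variable {A X : Type*} [Group A] [Group X] (r : ℕ) (φ : A →* MulAut X)

def fixedByHyperplanes : Subgroup X :=
  ⨆ (B : Subgroup A) (_ : B.index = r), φ.fixedSubgroup B

variable {r φ}

theorem fixedSubgroup_le_fixedByHyperplanes {B : Subgroup A} (hB : B.index = r) :
    φ.fixedSubgroup B ≤ φ.fixedByHyperplanes r :=
  le_iSup₂_of_le B hB le_rfl

theorem fixedByHyperplanes_le_comp_of_surjective {A' : Type*} [Group A'] {f : A' →* A}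
    (hf : Function.Surjective f) :
    φ.fixedByHyperplanes r ≤ (φ.comp f).fixedByHyperplanes r :=
  iSup₂_le fun B hB => by
    have hB' : (B.comap f).index = r := by rwa [Subgroup.index_comap_of_surjective _ hf]
    simpa [fixedSubgroup_comp, Subgroup.map_comap_eq_self_of_surjective hf] using
      (φ.comp f).fixedSubgroup_le_fixedByHyperplanes hB'

theorem map_fixedByHyperplanes_mulAutSubgroup (H : Subgroup X)
    (hH : ∀ a, ∀ x ∈ H, φ a x ∈ H) :
    ((φ.mulAutSubgroup H hH).fixedByHyperplanes r).map H.subtype =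
      ⨆ (B : Subgroup A) (_ : B.index = r), H ⊓ φ.fixedSubgroup B := by
  simp only [fixedByHyperplanes, Subgroup.map_iSup, map_fixedSubgroup_mulAutSubgroup]

theorem le_fixedByHyperplanes_of_mulAutSubgroup {H : Subgroup X}
    {hH : ∀ a, ∀ x ∈ H, φ a x ∈ H} (h : (φ.mulAutSubgroup H hH).fixedByHyperplanes r = ⊤) :
    H ≤ φ.fixedByHyperplanes r := by
  have hH' := φ.map_fixedByHyperplanes_mulAutSubgroup (r := r) H hH
  rw [h, ← MonoidHom.range_eq_map, Subgroup.range_subtype] at hH'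
  exact hH'.le.trans (iSup₂_mono fun _ _ => inf_le_right)

variable (φ) in
def quotientMulAutFixedSubgroup (N : Subgroup A) [N.Normal] :
    A ⧸ N →* MulAut (φ.fixedSubgroup N) :=
  QuotientGroup.lift N (φ.mulAutSubgroup _ fun a _ => φ.fixedSubgroup_invariant a)
    fun n hn => by ext x; exact x.2 n hn

theorem fixedSubgroup_le_fixedByHyperplanes_of_quotient {N : Subgroup A} [N.Normal]
    (h : (φ.quotientMulAutFixedSubgroup N).fixedByHyperplanes r = ⊤) :
    φ.fixedSubgroup N ≤ φ.fixedByHyperplanes r := by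
  have hcomp : (φ.quotientMulAutFixedSubgroup N).comp (QuotientGroup.mk' N) =
      φ.mulAutSubgroup _ fun a _ => φ.fixedSubgroup_invariant a :=
    QuotientGroup.lift_comp_mk' _ _ _
  refine le_fixedByHyperplanes_of_mulAutSubgroup
    (hH := fun a _ => φ.fixedSubgroup_invariant a) (eq_top_iff.2 ?_)
  rw [← hcomp, ← h]
  exact fixedByHyperplanes_le_comp_of_surjective (QuotientGroup.mk'_surjective N)

end Hyperplanes

section Coprime

variable {r : ℕ} {A X : Type*} [Group A] [Group X] {φ : A →* MulAut X}

theorem fixedSubgroup_mulAutQuotient_le_map [Finite X] [Fact r.Prime] {N : Subgroup X}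
    [N.Normal] (hN : ∀ a, ∀ x ∈ N, φ a x ∈ N) (hrN : ¬ r ∣ Nat.card N) {B : Subgroup A}
    (hB : IsPGroup r B) :
    (φ.mulAutQuotient N hN).fixedSubgroup B ≤ (φ.fixedSubgroup B).map (QuotientGroup.mk' N) := by
  intro z hz
  obtain ⟨x, rfl⟩ := QuotientGroup.mk'_surjective N z
  let _ : MulAction B X := MulAction.compHom X (φ.comp B.subtype)
  -- `B` permutes the coset `x N`, whose size `|N|` is prime to `r`, so it fixes a point of it.
  let coset : SubMulAction B X :=
    { carrier := QuotientGroup.mk ⁻¹' {(x : X ⧸ N)}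
      smul_mem' := fun b y (hy : (y : X ⧸ N) = x) => by
        change ((φ b y : X) : X ⧸ N) = x
        rw [← mulAutQuotient_mk φ N hN, hy]
        exact hz b b.2 }
  have hcard : Nat.card coset = Nat.card N :=
    (QuotientGroup.card_preimage_mk N {(x : X ⧸ N)}).trans (by simp)
  obtain ⟨⟨y, hy⟩, hfix⟩ := hB.nonempty_fixed_point_of_prime_not_dvd_card coset (hcard ▸ hrN)
  exact ⟨y, fun b hb => congrArg Subtype.val (hfix ⟨b, hb⟩), hy⟩

theorem fixedByHyperplanes_sup_eq_top_of_mulAutQuotient [Finite X] [Fact r.Prime]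
    (hA : IsPGroup r A) {N : Subgroup X} [N.Normal] (hN : ∀ a, ∀ x ∈ N, φ a x ∈ N)
    (hrN : ¬ r ∣ Nat.card N) (h : (φ.mulAutQuotient N hN).fixedByHyperplanes r = ⊤) :
    φ.fixedByHyperplanes r ⊔ N = ⊤ := by
  have hmap : (φ.fixedByHyperplanes r).map (QuotientGroup.mk' N) = ⊤ :=
    eq_top_iff.2 <| h ▸ iSup₂_le fun B hB =>
      (fixedSubgroup_mulAutQuotient_le_map hN hrN (hA.to_subgroup B)).trans
        (Subgroup.map_mono (fixedSubgroup_le_fixedByHyperplanes hB))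
  simpa [Subgroup.comap_map_eq] using congrArg (Subgroup.comap (QuotientGroup.mk' N)) hmap

theorem exists_sylow_invariant [Finite X] [Fact r.Prime] (hA : IsPGroup r A)
    (hrX : ¬ r ∣ Nat.card X) (q : ℕ) [Fact q.Prime] :
    ∃ P : Sylow q X, ∀ a, ∀ x ∈ (P : Subgroup X), φ a x ∈ (P : Subgroup X) := by
  let _ : MulDistribMulAction A X := MulDistribMulAction.compHom X φ
  obtain ⟨P⟩ := (inferInstance : Nonempty (Sylow q X))
  have hr : ¬ r ∣ Nat.card (Sylow q X) := fun h =>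
    hrX (h.trans ((Sylow.card_dvd_index P).trans (P : Subgroup X).index_dvd_card))
  obtain ⟨Q, hQ⟩ := hA.nonempty_fixed_point_of_prime_not_dvd_card (Sylow q X) hr
  refine ⟨Q, fun a x hx => ?_⟩
  have hQa : a • (Q : Subgroup X) = Q := by rw [← Sylow.pointwise_smul_def, hQ a]
  exact hQa ▸ Subgroup.smul_mem_pointwise_smul x a _ hx

end Coprime

section Trace

open scoped IsMulCommutative

variable {r : ℕ} {A V : Type*} [Group A] [Group V] [IsMulCommutative V] (φ : A →* MulAut V)

theorem prod_mem_fixedSubgroup [Fintype A] (B : Subgroup A) [DecidablePred (· ∈ B)] (v : V) :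
    ∏ b ∈ Finset.univ.filter (· ∈ B), φ b v ∈ φ.fixedSubgroup B := fun b' hb' => by
  rw [map_prod]
  refine Finset.prod_nbij' (b' * ·) (b'⁻¹ * ·) ?_ ?_ (by simp) (by simp) (by simp)
  · simpa using fun b hb => B.mul_mem hb' hb
  · simpa using fun b hb => B.mul_mem (B.inv_mem hb') hb

theorem fixedByHyperplanes_eq_top_of_card_eq_sq [Finite A] [Finite V] (hr : r.Prime)
    (hA : IsElementaryAbelian r A) (hcard : Nat.card A = r ^ 2) (hV : (Nat.card V).Coprime r) :
    φ.fixedByHyperplanes r = ⊤ := by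
  classical
  have := Fintype.ofFinite A
  have : Nontrivial A := Finite.one_lt_card_iff_nontrivial.1 (by
    rw [hcard]; exact Nat.one_lt_pow two_ne_zero hr.one_lt)
  obtain ⟨c, hc⟩ := exists_ne (1 : A)
  refine eq_top_iff.2 fun v _ => Subgroup.mem_of_pow_mem_of_coprime hV ?_
  have htrace := hA.prod_prod_hyperplanes hr hcard (fun b => φ b v)
  simp only [map_one, MulAut.one_apply] at htrace
  rw [eq_mul_inv_of_mul_eq htrace.symm]
  refine mul_mem (prod_mem fun B hB => ?_) (inv_mem ?_)
  · exact fixedSubgroup_le_fixedByHyperplanes (mem_hyperplanes.1 hB)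
      (φ.prod_mem_fixedSubgroup B v)
  · have htop := φ.prod_mem_fixedSubgroup ⊤ v
    simp only [Subgroup.mem_top, Finset.filter_true] at htop
    exact fixedSubgroup_le_fixedByHyperplanes (hA.index_zpowers hr hcard hc)
      (φ.fixedSubgroup_antitone le_top htop)

end Trace

section Generation

variable {r : ℕ} {A : Type*} [Group A] [Finite A]

theorem fixedByHyperplanes_eq_top_of_comp_subtype {V : Type*} [Group V] [IsMulCommutative V]
    [Finite V] (hr : r.Prime) (hA : IsElementaryAbelian r A) (φ : A →* MulAut V)
    (hV : (Nat.card V).Coprime r) {H : Subgroup A} (hH : H.index = r)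
    (h : (φ.comp H.subtype).fixedByHyperplanes r = ⊤) : φ.fixedByHyperplanes r = ⊤ := by
  have := hA.isMulCommutative
  rw [eq_top_iff, ← h]
  refine iSup₂_le fun B hB => ?_
  rw [fixedSubgroup_comp]
  refine fixedSubgroup_le_fixedByHyperplanes_of_quotient ?_
  refine fixedByHyperplanes_eq_top_of_card_eq_sq _ hr (hA.quotient _) ?_
    (hV.coprime_dvd_left (Subgroup.card_subgroup_dvd_card _))
  rw [← Subgroup.index_eq_card, Subgroup.index_map_subtype, hB, hH, sq]

theorem fixedByHyperplanes_eq_top_of_isMulCommutative [Nontrivial A] {V : Type*} [Group V]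
    [IsMulCommutative V] [Finite V] (hr : r.Prime) (hA : IsElementaryAbelian r A)
    (φ : A →* MulAut V) (hV : (Nat.card V).Coprime r) : φ.fixedByHyperplanes r = ⊤ := by
  have := Fact.mk hr
  induction hn : Nat.card A using Nat.strong_induction_on generalizing A with
  | _ n ih =>
  obtain ⟨k, hk⟩ := hA.isPGroup.exists_card_eq
  match k, hk with
  | 0, hk => exact absurd hk Finite.one_lt_card.ne'
  | 1, hk =>
    have hbot : (⊥ : Subgroup A).index = r := by rw [Subgroup.index_bot, hk, pow_one]
    exact eq_top_iff.2 (φ.fixedSubgroup_bot ▸ fixedSubgroup_le_fixedByHyperplanes hbot)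
  | 2, hk => exact fixedByHyperplanes_eq_top_of_card_eq_sq φ hr hA hk hV
  | k + 3, hk =>
    obtain ⟨H, hH⟩ := Sylow.exists_subgroup_card_pow_prime r
      (hk ▸ pow_dvd_pow r (Nat.le_succ (k + 2)))
    have hHr : H.index = r :=
      Subgroup.index_eq_of_card_eq (hk.trans (pow_succ r (k + 2))) hH (pow_pos hr.pos _)
    have : Nontrivial H := Finite.one_lt_card_iff_nontrivial.1 (by
      rw [hH]; exact Nat.one_lt_pow (by omega) hr.one_lt)
    refine fixedByHyperplanes_eq_top_of_comp_subtype hr hA φ hV hHr ?_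
    refine ih _ ?_ (hA.subgroup H) (φ.comp H.subtype) rfl
    rw [← hn, hH, hk]
    exact Nat.pow_lt_pow_right hr.one_lt (Nat.lt_succ_self _)


theorem fixedByHyperplanes_eq_top_of_quotient_center [Nontrivial A] {X : Type*} [Group X]
    [Finite X] (hr : r.Prime) (hA : IsElementaryAbelian r A) (φ : A →* MulAut X)
    (hX : (Nat.card X).Coprime r) (hZ : ∀ a, ∀ x ∈ Subgroup.center X, φ a x ∈ Subgroup.center X)
    (h : (φ.mulAutQuotient _ hZ).fixedByHyperplanes r = ⊤) : φ.fixedByHyperplanes r = ⊤ := by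
  have := Fact.mk hr
  have hZK : Subgroup.center X ≤ φ.fixedByHyperplanes r := le_fixedByHyperplanes_of_mulAutSubgroup
    (fixedByHyperplanes_eq_top_of_isMulCommutative hr hA (φ.mulAutSubgroup _ hZ)
      (hX.coprime_dvd_left (Subgroup.card_subgroup_dvd_card _)))
  rw [← sup_eq_left.2 hZK]
  exact fixedByHyperplanes_sup_eq_top_of_mulAutQuotient hA.isPGroup hZ
    ((Nat.Prime.coprime_iff_not_dvd hr).1
      (hX.coprime_dvd_left (Subgroup.card_subgroup_dvd_card _)).symm) h

theorem fixedByHyperplanes_eq_top [Nontrivial A] {X : Type*} [Group X] [Finite X]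
    (hr : r.Prime) (hA : IsElementaryAbelian r A) (φ : A →* MulAut X)
    (hX : (Nat.card X).Coprime r) : φ.fixedByHyperplanes r = ⊤ := by
  have := Fact.mk hr
  induction hn : Nat.card X using Nat.strong_induction_on generalizing X with
  | _ n ih =>
  rcases subsingleton_or_nontrivial X with _ | _
  · exact Subsingleton.elim _ _
  by_cases hpX : ∃ q, q.Prime ∧ IsPGroup q X
  · obtain ⟨q, hq, hpX⟩ := hpX
    have := Fact.mk hq
    have := hpX.center_nontrivial
    have hZ (a : A) (x : X) (hx : x ∈ Subgroup.center X) : φ a x ∈ Subgroup.center X :=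
      Subgroup.characteristic_iff_le_comap.1 inferInstance (φ a) hx
    refine fixedByHyperplanes_eq_top_of_quotient_center hr hA φ hX hZ (ih _ ?_ _
      (hX.coprime_dvd_left (Subgroup.card_quotient_dvd_card _)) rfl)
    rw [← hn, (Subgroup.center X).card_eq_card_quotient_mul_card_subgroup]
    exact lt_mul_of_one_lt_right Nat.card_pos Finite.one_lt_card
  · refine Subgroup.eq_top_of_forall_sylow_le fun q hq => ?_
    have := Fact.mk hq
    obtain ⟨P, hP⟩ := exists_sylow_invariant (φ := φ) hA.isPGroup
      ((Nat.Prime.coprime_iff_not_dvd hr).1 hX.symm) q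
    have hlt : Nat.card P < n := by
      refine hn ▸ (Subgroup.card_le_card_group _).lt_of_ne fun h => hpX ⟨q, hq, ?_⟩
      rw [Subgroup.card_eq_iff_eq_top] at h
      exact (h ▸ P.isPGroup').of_equiv Subgroup.topEquiv
    exact ⟨P, le_fixedByHyperplanes_of_mulAutSubgroup (ih _ hlt (φ.mulAutSubgroup P hP)
      (hX.coprime_dvd_left (Subgroup.card_subgroup_dvd_card _)) rfl)⟩

end Generation

end MonoidHom

section SignalizerFunctor

variable {r : ℕ} {A G : Type*} [Group A] [Group G] [MulDistribMulAction A G]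
  {θ ψ : A → Subgroup G}

theorem mem_thetaB {B : Subgroup A} {x : G} :
    x ∈ thetaB θ B ↔ ∀ b ∈ B, b ≠ 1 → x ∈ θ b := by
  simp [thetaB]

theorem thetaB_le {B : Subgroup A} {b : A} (hb : b ∈ B) (hb1 : b ≠ 1) : thetaB θ B ≤ θ b :=
  fun _ hx => mem_thetaB.1 hx b hb hb1

theorem thetaB_antitone {B C : Subgroup A} (h : B ≤ C) : thetaB θ C ≤ thetaB θ B :=
  fun _ hx => mem_thetaB.2 fun b hb hb1 => mem_thetaB.1 hx b (h hb) hb1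

theorem thetaB_mono (hsub : ∀ a : A, a ≠ 1 → ψ a ≤ θ a) (B : Subgroup A) :
    thetaB ψ B ≤ thetaB θ B :=
  fun _ hx => mem_thetaB.2 fun b hb hb1 => hsub b hb1 (mem_thetaB.1 hx b hb hb1)

namespace IsSignalizerFunctorOn

theorem finite_thetaB (hθ : IsSignalizerFunctorOn ⊤ θ) {B : Subgroup A} {b : A} (hb : b ∈ B)
    (hb1 : b ≠ 1) : Finite (thetaB θ B) :=
  have := (hθ b trivial hb1).1
  Finite.of_injective _ (Subgroup.inclusion_injective (thetaB_le hb hb1))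

theorem finite_thetaB_top [Nontrivial A] (hθ : IsSignalizerFunctorOn ⊤ θ) :
    Finite (thetaB θ ⊤) :=
  have ⟨_, hc⟩ := exists_ne (1 : A)
  hθ.finite_thetaB (Subgroup.mem_top _) hc

theorem thetaB_top_le_fixedSub (hθ : IsSignalizerFunctorOn ⊤ θ) (a : A) :
    thetaB θ ⊤ ≤ fixedSub G a := by
  rcases eq_or_ne a 1 with rfl | ha
  · exact fun x _ => one_smul A x
  · exact (thetaB_le (Subgroup.mem_top a) ha).trans (hθ a trivial ha).2.2.1

theorem thetaB_inf_thetaB_top_le (hθ : IsSignalizerFunctorOn ⊤ θ)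
    (hψ : IsSignalizerFunctorOn ⊤ ψ) {B : Subgroup A} {b : A} (hb : b ∈ B) (hb1 : b ≠ 1) :
    thetaB ψ B ⊓ thetaB θ ⊤ ≤ thetaB ψ ⊤ := fun _ ⟨hxψ, hxθ⟩ =>
  mem_thetaB.2 fun c _ hc => (hψ b trivial hb1).2.2.2.2 c trivial hc
    ⟨mem_thetaB.1 hxψ b hb hb1, hθ.thetaB_top_le_fixedSub c hxθ⟩

theorem relIndex_thetaB_le (hθ : IsSignalizerFunctorOn ⊤ θ) (hψ : IsSignalizerFunctorOn ⊤ ψ)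
    (hsub : ∀ a : A, a ≠ 1 → ψ a ≤ θ a) {B : Subgroup A} {b : A} (hb : b ∈ B) (hb1 : b ≠ 1) :
    (thetaB ψ ⊤).relIndex (thetaB ψ B) ≤ (thetaB θ ⊤).relIndex (thetaB θ B) := by
  have := hθ.finite_thetaB hb hb1
  have heq : thetaB ψ ⊤ = thetaB θ ⊤ ⊓ thetaB ψ B :=
    le_antisymm (le_inf (thetaB_mono hsub ⊤) (thetaB_antitone le_top))
      (inf_comm (thetaB θ ⊤) _ ▸ hθ.thetaB_inf_thetaB_top_le hψ hb hb1)
  rw [heq, Subgroup.inf_relIndex_right]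
  exact Subgroup.relIndex_le_of_le_right (thetaB_mono hsub B)
    (Subgroup.relIndex_pos_of_le (thetaB_antitone le_top)).ne'

theorem relIndex_thetaB_le_and_pos (hr : r.Prime) (hnc : ¬ IsCyclic A)
    (hθ : IsSignalizerFunctorOn ⊤ θ) (hψ : IsSignalizerFunctorOn ⊤ ψ)
    (hsub : ∀ a : A, a ≠ 1 → ψ a ≤ θ a) {B : Subgroup A} (hB : B.index = r) :
    (thetaB ψ ⊤).relIndex (thetaB ψ B) ≤ (thetaB θ ⊤).relIndex (thetaB θ B) ∧
      0 < (thetaB ψ ⊤).relIndex (thetaB ψ B) := by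
  obtain ⟨b, hb, hb1⟩ := Subgroup.exists_ne_one_mem_of_index_eq_prime hr hnc hB
  have := hψ.finite_thetaB hb hb1
  exact ⟨hθ.relIndex_thetaB_le hψ hsub hb hb1,
    Subgroup.relIndex_pos_of_le (thetaB_antitone le_top)⟩

theorem thetaB_eq_of_relIndex_eq (hθ : IsSignalizerFunctorOn ⊤ θ)
    (hsub : ∀ a : A, a ≠ 1 → ψ a ≤ θ a) {B : Subgroup A} {b : A} (hb : b ∈ B) (hb1 : b ≠ 1)
    (hrel : (thetaB ψ ⊤).relIndex (thetaB ψ B) = (thetaB θ ⊤).relIndex (thetaB θ B))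
    (hcard : Nat.card (thetaB ψ ⊤) = Nat.card (thetaB θ ⊤)) : thetaB ψ B = thetaB θ B := by
  have := hθ.finite_thetaB hb hb1
  refine Subgroup.eq_of_le_of_card_ge (thetaB_mono hsub B) ?_
  rw [← Subgroup.card_mul_relIndex (thetaB_antitone le_top (θ := θ)),
    ← Subgroup.card_mul_relIndex (thetaB_antitone le_top (θ := ψ)), hrel, hcard]

theorem le_of_forall_thetaB_eq [Finite A] (hr : r.Prime)
    (hA : IsElementaryAbelian r A) (hnc : ¬ IsCyclic A) (hθ : IsSignalizerFunctorOn ⊤ θ)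
    (hψ : IsSignalizerFunctorOn ⊤ ψ) (h : ∀ B : Subgroup A, B.index = r → thetaB ψ B = thetaB θ B)
    {c : A} (hc : c ≠ 1) : θ c ≤ ψ c := by
  have := nontrivial_of_not_isCyclic hnc
  obtain ⟨hfin, hinv, hcent, hco, hsig⟩ := hθ c trivial hc
  let Φ := MulDistribMulAction.toMulAut A G
  have hθc (a : A) (x : G) (hx : x ∈ θ c) : Φ a x ∈ θ c :=
    hinv a trivial ▸ Subgroup.smul_mem_pointwise_smul x a _ hx
  have hgen := Φ.map_fixedByHyperplanes_mulAutSubgroup (r := r) (θ c) hθc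
  rw [(Φ.mulAutSubgroup (θ c) hθc).fixedByHyperplanes_eq_top hr hA (hco.coprime_dvd_right
      (Subgroup.card_top (G := A) ▸ hA.prime_dvd_card hr)), ← MonoidHom.range_eq_map,
    Subgroup.range_subtype] at hgen
  rw [hgen]
  refine iSup₂_le fun B hB x ⟨hxθ, hxB⟩ => ?_
  obtain ⟨b, hb, hb1⟩ := Subgroup.exists_ne_one_mem_of_index_eq_prime hr hnc hB
  have hxθB : x ∈ thetaB ψ B :=
    h B hB ▸ mem_thetaB.2 fun b' hb' hb'1 => hsig b' trivial hb'1 ⟨hxθ, hxB b' hb'⟩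
  exact (hψ b trivial hb1).2.2.2.2 c trivial hc ⟨thetaB_le hb hb1 hxθB, hcent hxθ⟩

end IsSignalizerFunctorOn

end SignalizerFunctor

section SignNorm

variable {r : ℕ} {A G : Type*} [Group A] [Group G] [MulDistribMulAction A G]
  {θ ψ : A → Subgroup G}

theorem signNorm_eq_prod [Finite A] (r : ℕ) (θ : A → Subgroup G) :
    signNorm r θ = Nat.card (thetaB θ ⊤) *
      ∏ B ∈ hyperplanes r A, (thetaB θ ⊤).relIndex (thetaB θ B) :=
  congrArg _ (finprod_cond_eq_prod_of_cond_iff _ fun _ => mem_hyperplanes.symm)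

theorem signNorm_congr (h : ∀ a : A, a ≠ 1 → ψ a = θ a) : signNorm r ψ = signNorm r θ := by
  have hB : thetaB ψ = thetaB θ := funext fun _ =>
    le_antisymm (thetaB_mono (fun a ha => (h a ha).le) _) (thetaB_mono (fun a ha => (h a ha).ge) _)
  rw [signNorm, signNorm, hB]

variable [Finite A]

theorem signNorm_le (hr : r.Prime) (hnc : ¬ IsCyclic A) (hθ : IsSignalizerFunctorOn ⊤ θ)
    (hψ : IsSignalizerFunctorOn ⊤ ψ) (hsub : ∀ a : A, a ≠ 1 → ψ a ≤ θ a) :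
    signNorm r ψ ≤ signNorm r θ := by
  have := nontrivial_of_not_isCyclic hnc
  have := hθ.finite_thetaB_top
  rw [signNorm_eq_prod, signNorm_eq_prod]
  exact Nat.mul_le_mul (Subgroup.card_le_of_le (thetaB_mono hsub ⊤))
    (Finset.prod_le_prod' fun B hB =>
      (hθ.relIndex_thetaB_le_and_pos hr hnc hψ hsub (mem_hyperplanes.1 hB)).1)

theorem thetaB_eq_of_signNorm_eq (hr : r.Prime) (hnc : ¬ IsCyclic A)
    (hθ : IsSignalizerFunctorOn ⊤ θ) (hψ : IsSignalizerFunctorOn ⊤ ψ)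
    (hsub : ∀ a : A, a ≠ 1 → ψ a ≤ θ a) (heq : signNorm r ψ = signNorm r θ) {B : Subgroup A}
    (hB : B.index = r) : thetaB ψ B = thetaB θ B := by
  have := nontrivial_of_not_isCyclic hnc
  have := hθ.finite_thetaB_top
  have hrel (C) (hC : C ∈ hyperplanes r A) :=
    hθ.relIndex_thetaB_le_and_pos hr hnc hψ hsub (mem_hyperplanes.1 hC)
  rw [signNorm_eq_prod, signNorm_eq_prod, mul_eq_mul_iff_eq_and_eq_of_pos'
    (Subgroup.card_le_of_le (thetaB_mono hsub ⊤)) (Finset.prod_le_prod' fun B hB => (hrel B hB).1)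
    Nat.card_pos (Finset.prod_pos fun B hB => (hrel B hB).2)] at heq
  obtain ⟨b, hb, hb1⟩ := Subgroup.exists_ne_one_mem_of_index_eq_prime hr hnc hB
  refine hθ.thetaB_eq_of_relIndex_eq hsub hb hb1 ?_ heq.1
  by_contra hne
  exact (Finset.prod_lt_prod (fun B hB => (hrel B hB).2) (fun B hB => (hrel B hB).1)
    ⟨B, mem_hyperplanes.2 hB, ((hrel B (mem_hyperplanes.2 hB)).1).lt_of_ne hne⟩).ne heq.2

end SignNorm

/-- If `ψ` is a subfunctor of the `A`-signalizer functor `θ` (with `A` a noncyclic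
elementary abelian `r`-group), then `‖ψ‖ ≤ ‖θ‖`, with equality if and only if
`ψ(a) = θ(a)` for all `a ∈ A∖{1}`. -/
theorem signNorm_le_of_subfunctor
    {A G : Type*} [Group A] [Finite A] [Group G] [MulDistribMulAction A G]
    (r : ℕ) (hr : r.Prime) (hA : IsElementaryAbelian r A) (hnc : ¬ IsCyclic A)
    (θ ψ : A → Subgroup G)
    (hθ : IsSignalizerFunctorOn ⊤ θ) (hψ : IsSignalizerFunctorOn ⊤ ψ)
    (hsub : ∀ a : A, a ≠ 1 → ψ a ≤ θ a) :
    signNorm r ψ ≤ signNorm r θ ∧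
      (signNorm r ψ = signNorm r θ ↔ ∀ a : A, a ≠ 1 → ψ a = θ a) := by
  refine ⟨signNorm_le hr hnc hθ hψ hsub, fun heq c hc => ?_, signNorm_congr⟩
  exact le_antisymm (hsub c hc) (hθ.le_of_forall_thetaB_eq hr hA hnc hψ
    (fun B hB => thetaB_eq_of_signNorm_eq hr hnc hθ hψ hsub heq hB) hc)
end
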